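/- arXiv:2103.07393 — 10 statements merged into one kernel-verified Lean document; each statement's English description precedes it below -/
import Mathlib

section
/- For a prime power q > 2 and integers n ≥ k > 0, the Gaussian binomial coefficient satisfies [n choose k]_q < q^((n-k)k) · e^(1/(q-2)). -/
open Finset

/-- The Gaussian binomial coefficient `[n choose k]_q` with real parameter `q`. -/
noncomputable def gaussBinom (q : ℝ) (n k : ℕ) : ℝ :=
  if k ≤ n then
    (∏ i ∈ Finset.range k, (q ^ (n - i) - 1)) / (∏ i ∈ Finset.range k, (q ^ (i + 1) - 1))
  else 0

private lemma factor_lb (Q : ℝ) (hQ : 3 ≤ Q) (j : ℕ) (hj : 1 ≤ j) :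
    Q ^ j * Real.exp (-(Q / (Q - 1) * (1 / Q) ^ j)) ≤ Q ^ j - 1 := by
  have hQ0 : (0:ℝ) < Q := by linarith
  set x : ℝ := (1 / Q) ^ j with hx
  have hx0 : 0 < x := pow_pos (by positivity) j
  have hxle : x ≤ 1 / Q := by
    calc x ≤ (1/Q) ^ 1 := pow_le_pow_of_le_one (by positivity) (by
              rw [div_le_one hQ0]; linarith) hj
    _ = 1 / Q := pow_one _
  have hx1 : x < 1 := lt_of_le_of_lt hxle (by rw [div_lt_one hQ0]; linarith)
  have h1x : 0 < 1 - x := by linarith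
  -- step 1: exp(-(x/(1-x))) ≤ 1 - x
  have key1 : Real.exp (-(x / (1 - x))) ≤ 1 - x := by
    have h := Real.add_one_le_exp (x / (1 - x))
    have h2 : 1 / (1 - x) ≤ Real.exp (x / (1 - x)) := by
      have : x / (1 - x) + 1 = 1 / (1 - x) := by field_simp; ring
      linarith
    have hE : 0 < Real.exp (x / (1 - x)) := Real.exp_pos _
    rw [Real.exp_neg]
    have h1xE : 1 ≤ (1 - x) * Real.exp (x / (1 - x)) := by
      have := (div_le_iff₀ h1x).mp h2
      linarith [mul_comm (1 - x) (Real.exp (x / (1 - x)))]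
    calc (Real.exp (x / (1 - x)))⁻¹
        ≤ ((1 - x) * Real.exp (x / (1 - x))) * (Real.exp (x / (1 - x)))⁻¹ := by
          nlinarith [inv_pos.mpr hE]
      _ = 1 - x := by field_simp
  -- step 2: x/(1-x) ≤ Q/(Q-1) * x
  have key2 : x / (1 - x) ≤ Q / (Q - 1) * x := by
    rw [div_le_iff₀ h1x]
    have hQ1 : 0 < Q - 1 := by linarith
    have h1 : (Q - 1) / Q ≤ 1 - x := by
      have : 1 - 1/Q = (Q-1)/Q := by field_simp
      linarith
    have h2 : Q / (Q - 1) * x * ((Q-1)/Q) = x := by field_simp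
    nlinarith [mul_le_mul_of_nonneg_left h1 (by positivity : 0 ≤ Q / (Q - 1) * x)]
  have key3 : Real.exp (-(Q / (Q - 1) * x)) ≤ 1 - x := by
    calc Real.exp (-(Q / (Q - 1) * x)) ≤ Real.exp (-(x / (1 - x))) :=
          Real.exp_le_exp.mpr (by linarith)
      _ ≤ 1 - x := key1
  have hxq : Q ^ j * x = 1 := by
    rw [hx, one_div, inv_pow, mul_inv_cancel₀ (by positivity)]
  calc Q ^ j * Real.exp (-(Q / (Q - 1) * x)) ≤ Q ^ j * (1 - x) :=
        mul_le_mul_of_nonneg_left key3 (by positivity)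
    _ = Q ^ j - 1 := by rw [mul_sub, mul_one, hxq]

private lemma sum_geom_le (Q : ℝ) (hQ : 3 ≤ Q) (k : ℕ) :
    ∑ i ∈ Finset.range k, Q / (Q - 1) * (1 / Q) ^ (i + 1) ≤ 1 / (Q - 2) := by
  have hQ0 : (0:ℝ) < Q := by linarith
  have hr0 : (0:ℝ) ≤ 1/Q := by positivity
  have hr1 : (1:ℝ)/Q < 1 := by rw [div_lt_one hQ0]; linarith
  have h1r : (0:ℝ) < 1 - 1/Q := by linarith
  have hgeom : ∑ i ∈ Finset.range k, (1/Q) ^ i ≤ 1 / (1 - 1/Q) := by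
    have h := geom_sum_mul (1/Q : ℝ) k
    have hpow : (0:ℝ) ≤ (1/Q)^k := by positivity
    rw [le_div_iff₀ h1r]
    nlinarith [h]
  have hsum : ∑ i ∈ Finset.range k, Q / (Q - 1) * (1 / Q) ^ (i + 1)
      = Q / (Q - 1) * (1/Q) * ∑ i ∈ Finset.range k, (1/Q) ^ i := by
    rw [Finset.mul_sum]
    exact Finset.sum_congr rfl fun i _ => by ring
  have hQ0' : Q ≠ 0 := by linarith
  have hQ1' : Q - 1 ≠ 0 := by linarith
  have h1 : 1 / (1 - 1/Q) = Q / (Q - 1) := by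
    rw [div_eq_div_iff (by linarith) hQ1']
    field_simp
  have hQ1pos : (0:ℝ) < Q - 1 := by linarith
  have hcoef : (0:ℝ) ≤ Q / (Q - 1) * (1/Q) := by positivity
  calc ∑ i ∈ Finset.range k, Q / (Q - 1) * (1 / Q) ^ (i + 1)
      ≤ Q / (Q - 1) * (1/Q) * (Q / (Q - 1)) := by
        rw [hsum]; rw [h1] at hgeom
        exact mul_le_mul_of_nonneg_left hgeom hcoef
    _ = Q / ((Q - 1) * (Q - 1)) := by field_simp
    _ ≤ 1 / (Q - 2) := by
        rw [div_le_div_iff₀ (by nlinarith) (by linarith)]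
        nlinarith

theorem stmt_0 (q : ℕ) (hq : IsPrimePow q) (hq2 : 2 < q) (n k : ℕ) (hk : 0 < k)
    (hkn : k ≤ n) :
    gaussBinom (q : ℝ) n k < (q : ℝ) ^ ((n - k) * k) * Real.exp (1 / ((q : ℝ) - 2)) := by
  have hQ3 : (3:ℝ) ≤ (q:ℝ) := by exact_mod_cast hq2
  set Q : ℝ := (q:ℝ) with hQdef
  have hQ0 : (0:ℝ) < Q := by linarith
  have hQ1 : (1:ℝ) < Q := by linarith
  have hDpos : 0 < ∏ i ∈ Finset.range k, (Q ^ (i+1) - 1) := by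
    apply Finset.prod_pos
    intro i _
    have : (1:ℝ) < Q ^ (i+1) := one_lt_pow₀ hQ1 (by omega)
    linarith
  have hgauss : gaussBinom Q n k =
      (∏ i ∈ Finset.range k, (Q ^ (n - i) - 1)) / (∏ i ∈ Finset.range k, (Q ^ (i + 1) - 1)) := by
    rw [gaussBinom, if_pos hkn]
  -- numerator strict bound
  have hN : (∏ i ∈ Finset.range k, (Q ^ (n - i) - 1)) < ∏ i ∈ Finset.range k, Q ^ (n - i) := by
    apply Finset.prod_lt_prod_of_nonempty
    · intro i hi
      simp only [Finset.mem_range] at hi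
      have : (1:ℝ) < Q ^ (n - i) := one_lt_pow₀ hQ1 (by omega)
      linarith
    · intro i _; linarith
    · exact Finset.nonempty_range_iff.mpr hk.ne'
  -- denominator lower bound
  have hD : Q ^ (∑ i ∈ Finset.range k, (i+1)) * Real.exp (-(1 / (Q - 2)))
      ≤ ∏ i ∈ Finset.range k, (Q ^ (i+1) - 1) := by
    have step : ∀ i ∈ Finset.range k,
        Q ^ (i+1) * Real.exp (-(Q / (Q - 1) * (1 / Q) ^ (i+1))) ≤ Q ^ (i+1) - 1 :=
      fun i _ => factor_lb Q hQ3 (i+1) (by omega)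
    have hprod : ∏ i ∈ Finset.range k, (Q ^ (i+1) * Real.exp (-(Q / (Q - 1) * (1 / Q) ^ (i+1))))
        ≤ ∏ i ∈ Finset.range k, (Q ^ (i+1) - 1) := by
      apply Finset.prod_le_prod
      · intro i _; positivity
      · exact step
    have heq : ∏ i ∈ Finset.range k, (Q ^ (i+1) * Real.exp (-(Q / (Q - 1) * (1 / Q) ^ (i+1))))
        = Q ^ (∑ i ∈ Finset.range k, (i+1)) *
          Real.exp (-(∑ i ∈ Finset.range k, Q / (Q - 1) * (1 / Q) ^ (i+1))) := by
      rw [Finset.prod_mul_distrib, Finset.prod_pow_eq_pow_sum, ← Real.exp_sum]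
      congr 1
      rw [← Finset.sum_neg_distrib]
    have hmono : Q ^ (∑ i ∈ Finset.range k, (i+1)) * Real.exp (-(1 / (Q - 2)))
        ≤ Q ^ (∑ i ∈ Finset.range k, (i+1)) *
          Real.exp (-(∑ i ∈ Finset.range k, Q / (Q - 1) * (1 / Q) ^ (i+1))) := by
      apply mul_le_mul_of_nonneg_left _ (by positivity)
      exact Real.exp_le_exp.mpr (by linarith [sum_geom_le Q hQ3 k])
    calc Q ^ (∑ i ∈ Finset.range k, (i+1)) * Real.exp (-(1 / (Q - 2)))
        ≤ _ := hmono
      _ = _ := heq.symm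
      _ ≤ _ := hprod
  -- exponent arithmetic
  have hAB : (∑ i ∈ Finset.range k, (n - i)) = (n - k) * k + ∑ i ∈ Finset.range k, (i+1) := by
    have h1 : ∀ i ∈ Finset.range k, n - i = (n - k) + ((k - 1 - i) + 1) := by
      intro i hi; simp only [Finset.mem_range] at hi; omega
    rw [Finset.sum_congr rfl h1, Finset.sum_add_distrib, Finset.sum_const,
        Finset.card_range, smul_eq_mul]
    have e1 : ∑ i ∈ Finset.range k, (k - 1 - i + 1) = ∑ i ∈ Finset.range k, (k - 1 - i) + k := by
      rw [Finset.sum_add_distrib, Finset.sum_const, Finset.card_range, smul_eq_mul, mul_one]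
    have e2 : ∑ i ∈ Finset.range k, (i + 1) = ∑ i ∈ Finset.range k, i + k := by
      rw [Finset.sum_add_distrib, Finset.sum_const, Finset.card_range, smul_eq_mul, mul_one]
    rw [e1, Finset.sum_range_reflect (fun i => i) k, e2, Nat.mul_comm]
  have hNpow : ∏ i ∈ Finset.range k, Q ^ (n - i) = Q ^ ∑ i ∈ Finset.range k, (n - i) :=
    Finset.prod_pow_eq_pow_sum _ _ _
  -- combine
  rw [hgauss]
  have hDpos' : 0 < Q ^ (∑ i ∈ Finset.range k, (i+1)) * Real.exp (-(1 / (Q - 2))) := by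
    positivity
  calc (∏ i ∈ Finset.range k, (Q ^ (n - i) - 1)) / (∏ i ∈ Finset.range k, (Q ^ (i + 1) - 1))
      < (∏ i ∈ Finset.range k, Q ^ (n - i)) / (∏ i ∈ Finset.range k, (Q ^ (i + 1) - 1)) :=
        div_lt_div_of_pos_right hN hDpos  -- name check
    _ ≤ (∏ i ∈ Finset.range k, Q ^ (n - i)) /
        (Q ^ (∑ i ∈ Finset.range k, (i+1)) * Real.exp (-(1 / (Q - 2)))) := by
        apply div_le_div_of_nonneg_left _ hDpos' hD  -- name check
        positivity
    _ = Q ^ ((n - k) * k) * Real.exp (1 / (Q - 2)) := by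
        rw [hNpow, hAB, pow_add, Real.exp_neg]
        field_simp
end

section
/- For integers n ≥ k > 0, the Gaussian binomial coefficient at q = 2 satisfies [n choose k]_2 < 2^((n-k)k+1) · e^(2/3). -/
open Finset


lemma aux1 (x : ℝ) (h0 : 0 ≤ x) (h4 : x ≤ 1/4) : Real.exp (-(4/3*x)) ≤ 1 - x := by
  have h1 : (1:ℝ) + 4/3*x ≤ Real.exp (4/3*x) := by
    have := Real.add_one_le_exp (4/3*x); linarith
  have h3 : Real.exp (-(4/3*x)) * Real.exp (4/3*x) = 1 := by
    rw [← Real.exp_add]; ring_nf; exact Real.exp_zero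
  nlinarith [Real.exp_pos (4/3*x), Real.exp_pos (-(4/3*x)), mul_nonneg h0 h0]

lemma prod_lb' (k : ℕ) (hk : 1 ≤ k) :
    (1/2:ℝ) * Real.exp (-(4/3)*(1/2 - (1/2)^k)) ≤
      ∏ i ∈ range k, (1 - (1/2:ℝ)^(i+1)) := by
  induction k with
  | zero => omega
  | succ k ih =>
    rcases Nat.eq_or_lt_of_le hk with h | h
    · simp [← h]; norm_num
    · have hk1 : 1 ≤ k := by omega
      have ih := ih hk1
      rw [Finset.prod_range_succ]
      have hx : Real.exp (-(4/3*(1/2:ℝ)^(k+1))) ≤ 1 - (1/2:ℝ)^(k+1) := by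
        apply aux1
        · positivity
        · calc ((1/2:ℝ))^(k+1) ≤ (1/2)^2 := by
                apply pow_le_pow_of_le_one (by norm_num) (by norm_num) (by omega)
             _ ≤ 1/4 := by norm_num
      calc (1/2:ℝ) * Real.exp (-(4/3)*(1/2 - (1/2)^(k+1)))
          = ((1/2:ℝ) * Real.exp (-(4/3)*(1/2 - (1/2)^k))) *
              Real.exp (-(4/3*(1/2:ℝ)^(k+1))) := by
            rw [mul_assoc, ← Real.exp_add]
            congr 2
            have : ((1/2:ℝ))^k = 2 * (1/2)^(k+1) := by
              rw [pow_succ]; ring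
            rw [this]; ring
        _ ≤ (∏ i ∈ range k, (1 - (1/2:ℝ)^(i+1))) * (1 - (1/2:ℝ)^(k+1)) := by
            apply mul_le_mul ih hx (Real.exp_pos _).le
            exact le_trans (by positivity) ih

lemma prod_lb (k : ℕ) (hk : 1 ≤ k) :
    (1/2:ℝ) * Real.exp (-(2/3)) ≤ ∏ i ∈ range k, (1 - (1/2:ℝ)^(i+1)) := by
  refine le_trans ?_ (prod_lb' k hk)
  have hp : (0:ℝ) < (1/2)^k := by positivity
  have : (-(2/3):ℝ) ≤ -(4/3)*(1/2 - (1/2)^k) := by nlinarith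
  have := Real.exp_le_exp.2 this
  nlinarith [Real.exp_pos (-(2/3):ℝ)]

lemma sums (n k : ℕ) (hkn : k ≤ n) :
    ∑ i ∈ range k, (n - i) = (n-k)*k + ∑ i ∈ range k, (i+1) := by
  induction k with
  | zero => simp
  | succ k ih =>
    have hk : k ≤ n := by omega
    rw [Finset.sum_range_succ, ih hk, Finset.sum_range_succ]
    have h1 : n - k = (n - (k+1)) + 1 := by omega
    rw [h1]; ring

theorem stmt_1 (n k : ℕ) (hk : 0 < k) (hkn : k ≤ n) :
    gaussBinom 2 n k < (2 : ℝ) ^ ((n - k) * k + 1) * Real.exp (2 / 3) := by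
  unfold gaussBinom
  rw [if_pos hkn]
  set N := ∏ i ∈ range k, ((2:ℝ) ^ (n - i) - 1) with hNdef
  set D := ∏ i ∈ range k, ((2:ℝ) ^ (i + 1) - 1) with hDdef
  have hfpos : ∀ i ∈ range k, (0:ℝ) < (2:ℝ) ^ (n - i) - 1 := by
    intro i hi
    rw [mem_range] at hi
    have h1 : (2:ℝ)^1 ≤ (2:ℝ)^(n-i) :=
      pow_le_pow_right₀ one_le_two (by omega)
    simp at h1; linarith
  have hNpos : 0 < N := Finset.prod_pos hfpos
  have hN : N < (2:ℝ) ^ (∑ i ∈ range k, (n - i)) := by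
    rw [← Finset.prod_pow_eq_pow_sum]
    apply Finset.prod_lt_prod_of_nonempty hfpos
    · intro i hi; linarith [hfpos i hi]
    · exact Finset.nonempty_range_iff.2 (by omega)
  have hDeq : D = (2:ℝ) ^ (∑ i ∈ range k, (i + 1)) * ∏ i ∈ range k, (1 - (1/2:ℝ)^(i+1)) := by
    rw [← Finset.prod_pow_eq_pow_sum, ← Finset.prod_mul_distrib]
    apply Finset.prod_congr rfl
    intro i _
    have h1 : (2:ℝ)^(i+1) * (1/2:ℝ)^(i+1) = 1 := by
      rw [← mul_pow]; norm_num
    ring_nf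
    ring_nf at h1
    nlinarith [h1]
  have hB : (2:ℝ) ^ (∑ i ∈ range k, (i + 1)) * ((1/2:ℝ) * Real.exp (-(2/3))) ≤ D := by
    rw [hDeq]
    have := prod_lb k hk
    have hp : (0:ℝ) < (2:ℝ) ^ (∑ i ∈ range k, (i + 1)) := by positivity
    nlinarith
  have hBpos : (0:ℝ) < (2:ℝ) ^ (∑ i ∈ range k, (i + 1)) * ((1/2:ℝ) * Real.exp (-(2/3))) := by
    positivity
  have hDpos : 0 < D := lt_of_lt_of_le hBpos hB
  set S := ∑ i ∈ range k, (i + 1) with hS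
  have hsum : (2:ℝ) ^ (∑ i ∈ range k, (n - i)) = 2 ^ ((n-k)*k) * 2 ^ S := by
    rw [sums n k hkn, pow_add]
  calc N / D ≤ N / ((2:ℝ) ^ S * ((1/2:ℝ) * Real.exp (-(2/3)))) := by
        apply div_le_div_of_nonneg_left hNpos.le hBpos hB
    _ < ((2:ℝ) ^ (∑ i ∈ range k, (n - i))) / ((2:ℝ) ^ S * ((1/2:ℝ) * Real.exp (-(2/3)))) := by
        exact div_lt_div_of_pos_right hN hBpos
    _ = (2 : ℝ) ^ ((n - k) * k + 1) * Real.exp (2 / 3) := by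
        rw [hsum, Real.exp_neg, pow_succ]
        have h1 : (0:ℝ) < (2:ℝ)^S := by positivity
        have h2 : (0:ℝ) < Real.exp (2/3) := Real.exp_pos _
        field_simp
end

section
/- For integers k ≥ 2 and real q ≥ 3, the product over t = 1 to k of q^t/(q^t - 1) is at most (1 + 1/(q-1)^k)^(((q-1)^k - 1)/(q-2)), and this quantity is strictly less than e^(1/(q-2)). -/
open Finset

theorem stmt_3 (q : ℝ) (hq : 3 ≤ q) (k : ℕ) (hk : 2 ≤ k) :
    (∏ t ∈ Finset.Icc 1 k, q ^ t / (q ^ t - 1)) ≤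
      Real.rpow (1 + 1 / (q - 1) ^ k) (((q - 1) ^ k - 1) / (q - 2)) ∧
    Real.rpow (1 + 1 / (q - 1) ^ k) (((q - 1) ^ k - 1) / (q - 2)) <
      Real.exp (1 / (q - 2)) := by
  have hq1 : (2:ℝ) ≤ q - 1 := by linarith
  have hq2 : (0:ℝ) < q - 2 := by linarith
  have hy4 : (4:ℝ) ≤ (q-1)^k := by
    calc (4:ℝ) = 2^2 := by norm_num
    _ ≤ (q-1)^2 := by gcongr
    _ ≤ (q-1)^k := pow_le_pow_right₀ (by linarith) hk
  have hypos : (0:ℝ) < (q-1)^k := by linarith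
  have hb1 : 1 < 1 + 1 / (q-1)^k := by
    have : 0 < 1 / (q-1)^k := by positivity
    linarith
  have hbpos : 0 < 1 + 1 / (q-1)^k := by linarith
  have hNpos : 0 < ((q-1)^k - 1)/(q-2) := div_pos (by linarith) hq2
  -- sum of exponents
  have hsum : ∑ t ∈ Finset.Icc 1 k, ((q-1) ^ (k - t) : ℝ) = ((q-1)^k - 1)/(q-2) := by
    rw [← Finset.Ico_add_one_right_eq_Icc, Finset.sum_Ico_eq_sum_range]
    have h1 : ∀ i ∈ Finset.range (k + 1 - 1), ((q-1) ^ (k - (1 + i)) : ℝ)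
        = (fun j => ((q-1)^j : ℝ)) (k - 1 - i) := by
      intro i _
      congr 1
      omega
    rw [Finset.sum_congr rfl h1]
    simp only [Nat.add_sub_cancel]
    rw [Finset.sum_range_reflect (fun j => ((q-1)^j : ℝ)) k]
    rw [geom_sum_eq (by intro h; linarith) k]
    ring_nf
  -- basic per-term facts
  have key : ∀ t : ℕ, 1 ≤ t → (q-1)^t + 1 ≤ q^t := by
    intro t ht
    induction t with
    | zero => omega
    | succ n ih =>
      rcases Nat.eq_zero_or_pos n with hn | hn
      · subst hn; simp
      · have ihn := ih hn
        have hqn : (1:ℝ) ≤ q^n := one_le_pow₀ (by linarith : (1:ℝ) ≤ q)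
        rw [pow_succ, pow_succ]
        nlinarith
  have hden : ∀ t : ℕ, 1 ≤ t → t ≤ k → 0 < q ^ t - 1 := by
    intro t ht htk
    have := key t ht
    have : (0:ℝ) < (q-1)^t := by positivity
    linarith [key t ht]
  -- main per-factor bound
  have step1 : ∀ t ∈ Finset.Icc 1 k,
      q ^ t / (q ^ t - 1) ≤ (1 + 1 / (q-1)^k) ^ (((q-1) ^ (k - t) : ℝ)) := by
    intro t ht
    simp only [Finset.mem_Icc] at ht
    obtain ⟨ht1, htk⟩ := ht
    have hdt := hden t ht1 htk
    have hqt1 := key t ht1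
    have hqtp : (0:ℝ) < (q-1)^t := by positivity
    have h2 : q^t/(q^t-1) ≤ 1 + 1/(q-1)^t := by
      rw [div_le_iff₀ hdt]
      have h3 : (1:ℝ) ≤ 1/(q-1)^t * (q^t - 1) := by
        have he : 1/(q-1)^t * (q^t - 1) = (q^t-1)/(q-1)^t := by ring
        rw [he, le_div_iff₀ hqtp]; linarith
      nlinarith
    have hpow : ((q-1):ℝ)^(k-t) * (q-1)^t = (q-1)^k := by
      rw [← pow_add]; congr 1; omega
    have hp1 : (1:ℝ) ≤ (q-1)^(k-t) := one_le_pow₀ (by linarith : (1:ℝ) ≤ q - 1)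
    have hbern := one_add_mul_self_le_rpow_one_add
      (show (-1:ℝ) ≤ 1/(q-1)^k from le_trans (show (-1:ℝ) ≤ 0 by norm_num) (by positivity)) hp1
    have heq : 1 + ((q-1):ℝ)^(k-t) * (1/(q-1)^k) = 1 + 1/(q-1)^t := by
      field_simp
      linarith [hpow]
    calc q^t/(q^t-1) ≤ 1 + 1/(q-1)^t := h2
    _ = 1 + ((q-1):ℝ)^(k-t) * (1/(q-1)^k) := heq.symm
    _ ≤ (1 + 1/(q-1)^k) ^ (((q-1) ^ (k - t) : ℝ)) := hbern
  constructor
  · show (∏ t ∈ Finset.Icc 1 k, q ^ t / (q ^ t - 1)) ≤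
      (1 + 1 / (q - 1) ^ k) ^ (((q - 1) ^ k - 1) / (q - 2))
    calc (∏ t ∈ Finset.Icc 1 k, q ^ t / (q ^ t - 1))
        ≤ ∏ t ∈ Finset.Icc 1 k, (1 + 1 / (q-1)^k) ^ (((q-1) ^ (k - t) : ℝ)) := by
          apply Finset.prod_le_prod
          · intro t ht
            simp only [Finset.mem_Icc] at ht
            exact le_of_lt (div_pos (by positivity) (hden t ht.1 ht.2))
          · exact step1
    _ = Real.exp (∑ t ∈ Finset.Icc 1 k, Real.log (1 + 1 / (q-1)^k) * ((q-1) ^ (k - t) : ℝ)) := by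
          rw [Real.exp_sum]
          exact Finset.prod_congr rfl fun t _ => Real.rpow_def_of_pos hbpos _
    _ = (1 + 1 / (q - 1) ^ k) ^ ((((q - 1) ^ k - 1) / (q - 2)) : ℝ) := by
          rw [← Finset.mul_sum, hsum, Real.rpow_def_of_pos hbpos]
  · show (1 + 1 / (q - 1) ^ k) ^ ((((q - 1) ^ k - 1) / (q - 2)) : ℝ) < Real.exp (1 / (q - 2))
    rw [Real.rpow_def_of_pos hbpos]
    apply Real.exp_lt_exp.mpr
    have hlog : Real.log (1 + 1 / (q-1)^k) < 1 / (q-1)^k := by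
      have := Real.log_lt_sub_one_of_pos hbpos (ne_of_gt hb1)
      linarith
    calc Real.log (1 + 1 / (q-1)^k) * (((q - 1) ^ k - 1) / (q - 2))
        < (1 / (q-1)^k) * (((q - 1) ^ k - 1) / (q - 2)) :=
          mul_lt_mul_of_pos_right hlog hNpos
    _ = ((q-1)^k - 1) / ((q-1)^k * (q - 2)) := by rw [div_mul_div_comm, one_mul]
    _ < 1 / (q - 2) := by
          rw [div_lt_div_iff₀ (by positivity) hq2]
          nlinarith
end

section
/- Let C be a nondegenerate linear [n,k]_q code with generator matrix G whose columns give a point (multi)set S in PG(k-1,q). A codeword c = uG (u ≠ 0) is minimal if and only if the points of S lying on the hyperplane Λ_u = {x : x·u = 0} span Λ_u. -/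
open Module

lemma phi_apply_aux {k : ℕ} {K : Type} [Field K] (w v : Fin k → K) :
    (∑ i, w i • (LinearMap.proj i : (Fin k → K) →ₗ[K] K)) v = ∑ i, w i * v i := by
  simp [LinearMap.sum_apply, LinearMap.smul_apply, LinearMap.proj_apply, smul_eq_mul]

lemma vecMul_apply_aux {k n : ℕ} {K : Type} [Field K] (w : Fin k → K)
    (G : Matrix (Fin k) (Fin n) K) (j : Fin n) :
    Matrix.vecMul w G j = ∑ i, w i * G i j := by
  simp [Matrix.vecMul, dotProduct]

lemma dual_rep_aux {k : ℕ} {K : Type} [Field K] (f : (Fin k → K) →ₗ[K] K)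
    (v : Fin k → K) : f v = ∑ i, f (Pi.single i 1) * v i := by
  conv_lhs => rw [← Finset.univ_sum_single v]
  rw [map_sum]
  refine Finset.sum_congr rfl fun i _ => ?_
  have : Pi.single i (v i) = v i • Pi.single (M := fun _ : Fin k => K) i 1 := by
    ext j
    by_cases h : j = i <;> simp [Pi.single_apply, h, mul_comm]
  rw [this, map_smul, smul_eq_mul, mul_comm]

theorem stmt_10 (q n k : ℕ) (K : Type) [Field K] [Fintype K] (hK : Fintype.card K = q)
    (G : Matrix (Fin k) (Fin n) K)
    (hnd : ∀ j : Fin n, ∃ i : Fin k, G i j ≠ 0)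
    (hG : Function.Injective fun u : Fin k → K => Matrix.vecMul u G)
    (u : Fin k → K) (hu : u ≠ 0) :
    -- the codeword `c = uG` is minimal
    (∀ u' : Fin k → K,
        {j | Matrix.vecMul u' G j ≠ 0} ⊆ {j | Matrix.vecMul u G j ≠ 0} →
        ∃ lam : K, Matrix.vecMul u' G = lam • Matrix.vecMul u G) ↔
    -- iff the columns of `G` lying on the hyperplane `Λ_u` span `Λ_u`
    Submodule.span K
        ({v : Fin k → K | ∃ j : Fin n, v = fun i => G i j} ∩
          (LinearMap.ker (∑ i, u i • (LinearMap.proj i : (Fin k → K) →ₗ[K] K)) :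
            Set (Fin k → K))) =
      LinearMap.ker (∑ i, u i • (LinearMap.proj i : (Fin k → K) →ₗ[K] K)) := by
  set φ : (Fin k → K) →ₗ[K] K := ∑ i, u i • (LinearMap.proj i : (Fin k → K) →ₗ[K] K) with hφdef
  have hφ : ∀ v, φ v = ∑ i, u i * v i := fun v => phi_apply_aux u v
  have hcol : ∀ j, φ (fun i => G i j) = Matrix.vecMul u G j := by
    intro j; rw [hφ, vecMul_apply_aux]
  set S : Set (Fin k → K) := {v : Fin k → K | ∃ j : Fin n, v = fun i => G i j} with hSdef
  set W : Submodule K (Fin k → K) := Submodule.span K (S ∩ (LinearMap.ker φ : Set (Fin k → K)))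
    with hWdef
  have hWle : W ≤ LinearMap.ker φ :=
    Submodule.span_le.2 (Set.inter_subset_right)
  constructor
  · -- minimal → span
    intro hmin
    by_contra hne
    obtain ⟨x, hxker, hxW⟩ : ∃ x, x ∈ LinearMap.ker φ ∧ x ∉ W := by
      by_contra h
      push_neg at h
      exact hne (le_antisymm hWle h)
    obtain ⟨f, hfx, hfW⟩ := Submodule.exists_dual_map_eq_bot_of_notMem hxW inferInstance
    set u' : Fin k → K := fun i => f (Pi.single i 1) with hu'def
    have hf_eq : ∀ v, f v = ∑ i, u' i * v i := fun v => dual_rep_aux f v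
    have hfW0 : ∀ y ∈ W, f y = 0 := by
      intro y hy
      have : f y ∈ Submodule.map f W := Submodule.mem_map_of_mem hy
      rw [hfW] at this
      exact (Submodule.mem_bot K).1 this
    have hsupp : {j | Matrix.vecMul u' G j ≠ 0} ⊆ {j | Matrix.vecMul u G j ≠ 0} := by
      intro j hj
      simp only [Set.mem_setOf_eq] at hj ⊢
      intro h0
      apply hj
      have hcolW : (fun i => G i j) ∈ W := by
        apply Submodule.subset_span
        refine ⟨⟨j, rfl⟩, ?_⟩
        simp only [SetLike.mem_coe, LinearMap.mem_ker]
        rw [hcol]; exact h0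
      have := hfW0 _ hcolW
      rw [hf_eq] at this
      rw [vecMul_apply_aux]
      exact this
    obtain ⟨lam, hlam⟩ := hmin u' hsupp
    have hu'eq : u' = lam • u := by
      apply hG
      simp only
      rw [hlam, Matrix.smul_vecMul]
    apply hfx
    rw [hf_eq, hu'eq]
    have : ∑ i, (lam • u) i * x i = lam * ∑ i, u i * x i := by
      rw [Finset.mul_sum]
      refine Finset.sum_congr rfl fun i _ => ?_
      simp [mul_assoc]
    rw [this, ← hφ, LinearMap.mem_ker.1 hxker, mul_zero]
  · -- span → minimal
    intro hspan u' hsupp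
    set ψ : (Fin k → K) →ₗ[K] K := ∑ i, u' i • (LinearMap.proj i : (Fin k → K) →ₗ[K] K)
      with hψdef
    have hψ : ∀ v, ψ v = ∑ i, u' i * v i := fun v => phi_apply_aux u' v
    have hcol' : ∀ j, ψ (fun i => G i j) = Matrix.vecMul u' G j := by
      intro j; rw [hψ, vecMul_apply_aux]
    have hker : LinearMap.ker φ ≤ LinearMap.ker ψ := by
      rw [← hspan]
      apply Submodule.span_le.2
      rintro v ⟨⟨j, rfl⟩, hv⟩
      simp only [SetLike.mem_coe, LinearMap.mem_ker] at hv ⊢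
      rw [hcol'] at *
      by_contra h
      have := hsupp h
      simp only [Set.mem_setOf_eq] at this
      rw [hcol] at hv
      exact this hv
    -- φ ≠ 0 since u ≠ 0
    obtain ⟨i0, hi0⟩ : ∃ i, u i ≠ 0 := by
      by_contra h
      push_neg at h
      exact hu (funext h)
    have hφs : φ (Pi.single i0 1) = u i0 := by
      rw [hφ]
      rw [Finset.sum_eq_single i0]
      · simp
      · intro b _ hb
        simp [Pi.single_apply, hb]
      · simp
    set y : Fin k → K := (u i0)⁻¹ • (Pi.single (M := fun _ : Fin k => K) i0 1) with hydef
    have hφy : φ y = 1 := by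
      rw [hydef, map_smul, hφs, smul_eq_mul, inv_mul_cancel₀ hi0]
    refine ⟨ψ y, ?_⟩
    funext j
    have hmem : (fun i => G i j) - φ (fun i => G i j) • y ∈ LinearMap.ker φ := by
      simp [LinearMap.mem_ker, map_sub, map_smul, hφy]
    have := LinearMap.mem_ker.1 (hker hmem)
    rw [map_sub, map_smul, sub_eq_zero] at this
    calc Matrix.vecMul u' G j = ψ (fun i => G i j) := (hcol' j).symm
      _ = φ (fun i => G i j) • ψ y := this
      _ = (ψ y • Matrix.vecMul u G) j := by
          rw [hcol]; simp [smul_eq_mul, mul_comm]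
end

section
/- Let C be a nondegenerate linear [n,k]_q code with generator matrix G whose columns give a point set S in PG(k-1,q). Then C is a minimal code if and only if S is a cutting blocking set of PG(k-1,q), i.e., S meets every hyperplane in a set of points spanning that hyperplane. -/
open Module

/-- The linear functional `v ↦ u ⬝ᵥ v` on `Fin k → K`. -/
private def ellAux {k : ℕ} {K : Type} [Field K] (u : Fin k → K) :
    (Fin k → K) →ₗ[K] K where
  toFun v := dotProduct u v
  map_add' x y := dotProduct_add u x y
  map_smul' c x := by simp [dotProduct_smul]

private lemma ellAux_col {k n : ℕ} {K : Type} [Field K] (u : Fin k → K)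
    (G : Matrix (Fin k) (Fin n) K) (j : Fin n) :
    ellAux u (fun i => G i j) = Matrix.vecMul u G j := rfl

/-- For `u ≠ 0` there is a vector on which `ellAux u` takes value 1. -/
private lemma ellAux_exists_one {k : ℕ} {K : Type} [Field K] {u : Fin k → K}
    (hu : u ≠ 0) : ∃ v : Fin k → K, ellAux u v = 1 := by
  obtain ⟨i, hi⟩ : ∃ i, u i ≠ 0 := by
    by_contra h
    push_neg at h
    exact hu (funext fun i => h i)
  refine ⟨Pi.single i (u i)⁻¹, ?_⟩
  simp [ellAux, dotProduct_single, mul_inv_cancel₀ hi]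

private lemma ellAux_surj {k : ℕ} {K : Type} [Field K] {u : Fin k → K}
    (hu : u ≠ 0) : Function.Surjective (ellAux u) := by
  obtain ⟨v, hv⟩ := ellAux_exists_one hu
  intro c
  exact ⟨c • v, by rw [map_smul, hv, smul_eq_mul, mul_one]⟩

private lemma finrank_ker_ellAux {k : ℕ} {K : Type} [Field K] {u : Fin k → K}
    (hu : u ≠ 0) : finrank K (LinearMap.ker (ellAux u)) = k - 1 := by
  have hrn := (ellAux (K := K) u).finrank_range_add_finrank_ker
  rw [Module.finrank_fin_fun (R := K)] at hrn
  have hr : LinearMap.range (ellAux u) = ⊤ :=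
    LinearMap.range_eq_top.2 (ellAux_surj hu)
  rw [hr, finrank_top, finrank_self] at hrn
  omega

/-- Every hyperplane is the kernel of some `ellAux u` with `u ≠ 0`. -/
private lemma exists_ellAux_ker {k : ℕ} {K : Type} [Field K] (hk : 1 ≤ k)
    (H : Submodule K (Fin k → K)) (hH : finrank K H = k - 1) :
    ∃ u : Fin k → K, u ≠ 0 ∧ LinearMap.ker (ellAux u) = H := by
  have hfin : finrank K (Fin k → K) = k := Module.finrank_fin_fun (R := K)
  have hq : finrank K ((Fin k → K) ⧸ H) = 1 := by
    have := Submodule.finrank_quotient_add_finrank H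
    rw [hH, hfin] at this
    omega
  have e : ((Fin k → K) ⧸ H) ≃ₗ[K] K :=
    LinearEquiv.ofFinrankEq _ _ (by rw [hq, finrank_self])
  set f : (Fin k → K) →ₗ[K] K := e.toLinearMap ∘ₗ H.mkQ with hf
  have hker : LinearMap.ker f = H := by
    rw [hf, LinearMap.ker_comp, LinearEquiv.ker, Submodule.comap_bot, Submodule.ker_mkQ]
  set u : Fin k → K := fun i => f (Pi.single i 1) with hu
  have hfe : ellAux u = f := by
    apply LinearMap.pi_ext
    intro i x
    have h1 : (Pi.single i x : Fin k → K) = x • (Pi.single i 1 : Fin k → K) := by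
      funext j
      by_cases h : j = i
      · subst h; simp
      · simp [Pi.single_eq_of_ne h]
    rw [h1, map_smul, map_smul]
    congr 1
    simp [ellAux, dotProduct_single, hu]
  refine ⟨u, ?_, by rw [hfe, hker]⟩
  intro h0
  have : LinearMap.ker f = ⊤ := by
    rw [← hfe]
    ext v
    simp [ellAux, h0, dotProduct]
  rw [hker] at this
  have : finrank K H = k := by
    rw [this, finrank_top, hfin]
  omega

theorem stmt_11 (q n k : ℕ) (K : Type) [Field K] [Fintype K] (hK : Fintype.card K = q)
    (G : Matrix (Fin k) (Fin n) K)
    (hnd : ∀ j : Fin n, ∃ i : Fin k, G i j ≠ 0)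
    (hG : Function.Injective fun u : Fin k → K => Matrix.vecMul u G) :
    -- the code generated by `G` is minimal
    (∀ u : Fin k → K, u ≠ 0 →
      ∀ u' : Fin k → K,
        {j | Matrix.vecMul u' G j ≠ 0} ⊆ {j | Matrix.vecMul u G j ≠ 0} →
        ∃ lam : K, Matrix.vecMul u' G = lam • Matrix.vecMul u G) ↔
    -- iff the set of columns of `G` is a cutting blocking set of `PG(k-1,q)`
    (∀ H : Submodule K (Fin k → K), finrank K H = k - 1 →
      Submodule.span K
          ({v : Fin k → K | ∃ j : Fin n, v = fun i => G i j} ∩ (H : Set (Fin k → K))) = H) := by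
  constructor
  · -- minimal → cutting
    intro hmin H hH
    rcases Nat.eq_zero_or_pos k with hk | hk
    · -- trivial case k = 0
      subst hk
      apply le_antisymm
      · exact Submodule.span_le.2 Set.inter_subset_right
      · intro x _
        have : x = 0 := funext fun i => absurd i.2 (by omega)
        rw [this]
        exact Submodule.zero_mem _
    · obtain ⟨u, hu0, hkeru⟩ := exists_ellAux_ker hk H hH
      set S : Set (Fin k → K) := {v : Fin k → K | ∃ j : Fin n, v = fun i => G i j} with hS
      set W : Submodule K (Fin k → K) := Submodule.span K (S ∩ (H : Set (Fin k → K))) with hW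
      have hWH : W ≤ H := Submodule.span_le.2 Set.inter_subset_right
      by_contra hne
      have hWlt : W < H := lt_of_le_of_ne hWH hne
      have hfinW : finrank K W < k - 1 := hH ▸ Submodule.finrank_lt_finrank_of_lt hWlt
      -- the space of vectors orthogonal to W
      set Φ : (Fin k → K) →ₗ[K] Module.Dual K W :=
        { toFun := fun w => (ellAux w).domRestrict W
          map_add' := by
            intro a b
            ext x
            simp [ellAux, add_dotProduct]
          map_smul' := by
            intro c a
            ext x
            simp [ellAux, smul_dotProduct] } with hΦ
      have hrnΦ : finrank K (LinearMap.range Φ) + finrank K (LinearMap.ker Φ) = k := by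
        have := Φ.finrank_range_add_finrank_ker
        rwa [Module.finrank_fin_fun (R := K)] at this
      have hrangeΦ : finrank K (LinearMap.range Φ) ≤ finrank K W := by
        have h1 : finrank K (LinearMap.range Φ) ≤ finrank K (Module.Dual K W) := by
          apply Submodule.finrank_le
        rwa [Subspace.dual_finrank_eq] at h1
      have hkerΦ : 2 ≤ finrank K (LinearMap.ker Φ) := by omega
      -- `ker Φ` is not contained in the line spanned by `u`
      have hnotle : ¬ (LinearMap.ker Φ ≤ Submodule.span K {u}) := by
        intro hle
        have := Submodule.finrank_mono hle
        rw [finrank_span_singleton hu0] at this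
        omega
      obtain ⟨u', hu'mem, hu'not⟩ := SetLike.not_le_iff_exists.1 hnotle
      -- supports are nested
      have hsupp : {j | Matrix.vecMul u' G j ≠ 0} ⊆ {j | Matrix.vecMul u G j ≠ 0} := by
        intro j hj
        by_contra hj2
        simp only [Set.mem_setOf_eq, not_not] at hj2 hj ⊢
        apply hj
        have hcolH : (fun i => G i j) ∈ H := by
          rw [← hkeru]
          exact LinearMap.mem_ker.2 (by rw [ellAux_col, hj2])
        have hcolW : (fun i => G i j) ∈ W :=
          Submodule.subset_span ⟨⟨j, rfl⟩, hcolH⟩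
        have := LinearMap.congr_fun (LinearMap.mem_ker.1 hu'mem) ⟨_, hcolW⟩
        simpa [hΦ, ellAux_col] using this
      obtain ⟨lam, hlam⟩ := hmin u hu0 u' hsupp
      have : Matrix.vecMul u' G = Matrix.vecMul (lam • u) G := by
        rw [Matrix.smul_vecMul, hlam]
      have hu'eq : u' = lam • u := hG this
      exact hu'not (hu'eq ▸ Submodule.smul_mem _ lam (Submodule.mem_span_singleton_self u))
  · -- cutting → minimal
    intro hcut u hu0 u' hsupp
    set H : Submodule K (Fin k → K) := LinearMap.ker (ellAux u) with hH
    have hHfr : finrank K H = k - 1 := finrank_ker_ellAux hu0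
    have hspan := hcut H hHfr
    -- `ellAux u'` vanishes on H
    have hvan : H ≤ LinearMap.ker (ellAux u') := by
      rw [← hspan]
      apply Submodule.span_le.2
      rintro x ⟨⟨j, rfl⟩, hxH⟩
      have hx0 : Matrix.vecMul u G j = 0 := by
        rw [← ellAux_col]
        exact LinearMap.mem_ker.1 hxH
      have : Matrix.vecMul u' G j = 0 := by
        by_contra hc
        exact hsupp hc hx0
      exact LinearMap.mem_ker.2 (by rw [ellAux_col, this])
    obtain ⟨v, hv⟩ := ellAux_exists_one hu0
    refine ⟨ellAux u' v, ?_⟩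
    funext j
    set g : Fin k → K := fun i => G i j with hg
    have hmem : g - (ellAux u g) • v ∈ H := by
      rw [hH, LinearMap.mem_ker, map_sub, map_smul, hv, smul_eq_mul, mul_one, sub_self]
    have h0 : ellAux u' (g - (ellAux u g) • v) = 0 := LinearMap.mem_ker.1 (hvan hmem)
    rw [map_sub, map_smul, sub_eq_zero, smul_eq_mul] at h0
    calc Matrix.vecMul u' G j = ellAux u' g := rfl
      _ = ellAux u g * ellAux u' v := h0
      _ = ellAux u' v * Matrix.vecMul u G j := by rw [ellAux_col]; ring
      _ = (ellAux u' v • Matrix.vecMul u G) j := by simp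
end

section
/- A point set S of PG(N,q) is a cutting blocking set if and only if for every hyperplane Λ, the set S \ Λ is an affine blocking set with respect to hyperplanes in the affine space PG(N,q) \ Λ, i.e., S \ Λ meets every hyperplane of PG(N,q) other than Λ outside of Λ. -/
open Module

theorem stmt_12 (q N : ℕ) (K : Type) [Field K] [Fintype K] (hK : Fintype.card K = q)
    (S : Set (Fin (N + 1) → K)) (hS0 : (0 : Fin (N + 1) → K) ∉ S) :
    -- `S` is a cutting blocking set of `PG(N,q)`
    (∀ H : Submodule K (Fin (N + 1) → K), finrank K H = N →
        Submodule.span K (S ∩ (H : Set (Fin (N + 1) → K))) = H) ↔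
    -- iff for each hyperplane `Λ`, the set `S \ Λ` blocks every other hyperplane
    (∀ Λ H : Submodule K (Fin (N + 1) → K), finrank K Λ = N → finrank K H = N →
        H ≠ Λ → ∃ v ∈ S, v ∈ H ∧ v ∉ Λ) := by
  have hV : finrank K (Fin (N + 1) → K) = N + 1 := by
    simp [Module.finrank_fin_fun]
  constructor
  · intro h Λ H hΛ hH hne
    by_contra hc
    push_neg at hc
    have hsub : S ∩ (H : Set (Fin (N + 1) → K)) ⊆ (Λ : Set (Fin (N + 1) → K)) := by
      rintro v ⟨hvS, hvH⟩
      by_contra hvΛ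
      exact hvΛ (hc v hvS hvH)
    have hle : H ≤ Λ := by
      rw [← h H hH]
      exact Submodule.span_le.mpr hsub
    exact hne (Submodule.eq_of_le_of_finrank_le hle (by rw [hΛ, hH]))
  · intro h H hH
    set W := Submodule.span K (S ∩ (H : Set (Fin (N + 1) → K))) with hW
    have hWH : W ≤ H := Submodule.span_le.mpr Set.inter_subset_right
    by_contra hne
    have hWlt : W < H := lt_of_le_of_ne hWH hne
    have hHtop : H ≠ ⊤ := by
      intro e
      rw [e, finrank_top, hV] at hH
      omega
    obtain ⟨x, hx⟩ : ∃ x, x ∉ H := by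
      by_contra hcon
      push_neg at hcon
      exact hHtop (Submodule.eq_top_iff'.mpr hcon)
    have hWr : finrank K W < N := by
      have := Submodule.finrank_lt_finrank_of_lt hWlt
      omega
    have hsupr : finrank K ↥(W ⊔ Submodule.span K {x}) < N + 1 := by
      have h1 := Submodule.finrank_add_le_finrank_add_finrank W (Submodule.span K {x})
      have h2 : finrank K (Submodule.span K ({x} : Set (Fin (N+1) → K))) ≤ 1 := by
        simpa using finrank_span_le_card ({x} : Set (Fin (N+1) → K))
      omega
    have hlt : W ⊔ Submodule.span K {x} < ⊤ := by
      refine Submodule.lt_top_of_finrank_lt_finrank ?_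
      rw [hV]; exact hsupr
    obtain ⟨f, hf0, hker⟩ := Submodule.exists_le_ker_of_lt_top _ hlt
    have hrange : LinearMap.range f = ⊤ := by
      rcases DFunLike.ne_iff.mp hf0 with ⟨y, hy⟩
      simp only [LinearMap.zero_apply] at hy
      rw [LinearMap.range_eq_top]
      intro c
      exact ⟨(c / f y) • y, by rw [map_smul, smul_eq_mul]; field_simp⟩
    have hΛ : finrank K (LinearMap.ker f) = N := by
      have := LinearMap.finrank_range_add_finrank_ker f
      rw [hrange, finrank_top, hV] at this
      have h1 : finrank K K = 1 := finrank_self K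
      omega
    have hxker : x ∈ LinearMap.ker f :=
      hker (Submodule.mem_sup_right (Submodule.mem_span_singleton_self x))
    have hHne : H ≠ LinearMap.ker f := by
      intro e
      exact hx (e ▸ hxker)
    obtain ⟨v, hvS, hvH, hvΛ⟩ := h (LinearMap.ker f) H hΛ hH hHne
    exact hvΛ (hker (Submodule.mem_sup_left (Submodule.subset_span ⟨hvS, hvH⟩)))
end

section
/- Every blocking set of the affine space AG(N,q) (a point set meeting every hyperplane of AG(N,q)) has at least N(q-1)+1 points. -/
open Module

section JamisonAux
open Finset MvPolynomial

lemma aux_sum_pow (K : Type) [Field K] [Fintype K] (k : ℕ)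
    (h : k = 0 ∨ ¬ (Fintype.card K - 1 ∣ k)) : ∑ x : K, x ^ k = 0 := by
  classical
  rcases h with rfl | h
  · simp only [pow_zero, sum_const, card_univ, nsmul_one, FiniteField.cast_card_eq_zero]
  · have hk : k ≠ 0 := by rintro rfl; exact h (dvd_zero _)
    let φ : Kˣ ↪ K := ⟨Units.val, Units.val_injective⟩
    have huniv : univ.map φ = univ \ {0} := by
      ext x
      simp only [mem_map, mem_univ, Function.Embedding.coeFn_mk, true_and, mem_sdiff,
        mem_singleton, φ]; exact isUnit_iff_ne_zero
    calc
      ∑ x : K, x ^ k = ∑ x ∈ univ \ {(0 : K)}, x ^ k := by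
        rw [← sum_sdiff ({0} : Finset K).subset_univ, sum_singleton, zero_pow hk, add_zero]
      _ = ∑ x : Kˣ, (x ^ k : K) := by simp [φ, ← huniv, univ.sum_map φ]
      _ = 0 := by rw [FiniteField.sum_pow_units K k, if_neg h]

lemma aux_sum_eval (K : Type) [Field K] [Fintype K] (N : ℕ)
    (f : MvPolynomial (Fin N) K) (hf : f.totalDegree < N * (Fintype.card K - 1)) :
    ∑ x : Fin N → K, MvPolynomial.eval x f = 0 := by
  classical
  simp only [MvPolynomial.eval_eq']
  rw [Finset.sum_comm]
  apply Finset.sum_eq_zero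
  intro d hd
  rw [← Finset.mul_sum]
  have hx : ∑ x : Fin N → K, ∏ i, x i ^ d i = ∏ i, ∑ t : K, t ^ d i := by
    rw [Finset.prod_univ_sum]
    simp [Fintype.piFinset_univ]
  rw [hx]
  have : ∃ i, d i = 0 ∨ ¬ (Fintype.card K - 1 ∣ d i) := by
    by_contra hcon
    push_neg at hcon
    have hge : ∀ i, Fintype.card K - 1 ≤ d i := fun i =>
      Nat.le_of_dvd (Nat.pos_of_ne_zero (hcon i).1) (hcon i).2
    have hsum : N * (Fintype.card K - 1) ≤ ∑ i, d i := by
      calc N * (Fintype.card K - 1) = ∑ _i : Fin N, (Fintype.card K - 1) := by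
            simp [Finset.sum_const, mul_comm]
        _ ≤ ∑ i, d i := Finset.sum_le_sum fun i _ => hge i
    have hle : (d.sum fun _ e => e) ≤ f.totalDegree := MvPolynomial.le_totalDegree hd
    have : (∑ i, d i) ≤ f.totalDegree := by
      rwa [Finsupp.sum_fintype] at hle
      intro; rfl
    omega
  obtain ⟨i, hi⟩ := this
  rw [Finset.prod_eq_zero (Finset.mem_univ i) (aux_sum_pow K (d i) hi), mul_zero]

end JamisonAux

/-- Jamison / Brouwer–Schrijver: an affine blocking set of `AG(N,q)` (a point set meeting
every coset of every linear hyperplane of `F_q^N`) has at least `N(q-1)+1` points. -/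
theorem stmt_13 (q N : ℕ) (K : Type) [Field K] [Fintype K] (hK : Fintype.card K = q)
    (B : Finset (Fin N → K))
    (hB : ∀ W : Submodule K (Fin N → K), finrank K W = N - 1 →
        ∀ v : Fin N → K, ∃ b ∈ B, b - v ∈ W) :
    N * (q - 1) + 1 ≤ B.card := by
  classical
  subst hK
  set q := Fintype.card K with hq
  have hq2 : 2 ≤ q := Fintype.one_lt_card
  rcases Nat.eq_zero_or_pos N with hN | hN
  · subst hN
    obtain ⟨b, hb, -⟩ := hB ⊥ (by simp) 0
    simpa using Finset.card_pos.mpr ⟨b, hb⟩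
  -- linear functionals
  set φ : (Fin N → K) → ((Fin N → K) →ₗ[K] K) :=
    fun a => ∑ i, a i • (LinearMap.proj i : (Fin N → K) →ₗ[K] K) with hφ
  have hφapp : ∀ a x, φ a x = ∑ i, a i * x i := by
    intro a x
    simp [hφ, LinearMap.sum_apply, smul_eq_mul]
  have hker : ∀ a : Fin N → K, a ≠ 0 → finrank K (LinearMap.ker (φ a)) = N - 1 := by
    intro a ha
    obtain ⟨i, hi⟩ := Function.ne_iff.mp ha
    simp only [Pi.zero_apply] at hi
    have hsurj : Function.Surjective (φ a) := by
      intro c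
      have hsingle : ∑ j, a j * (Pi.single i 1 : Fin N → K) j = a i := by
        rw [Finset.sum_eq_single i]
        · simp
        · intro j _ hj; simp [Pi.single_apply, hj]
        · simp
      refine ⟨(c / a i) • (Pi.single i 1 : Fin N → K), ?_⟩
      rw [map_smul, smul_eq_mul]
      simp only [hφapp]
      rw [hsingle]
      field_simp
    have h1 : finrank K (LinearMap.range (φ a)) = 1 := by
      rw [LinearMap.range_eq_top.mpr hsurj, finrank_top, finrank_self]
    have h2 := LinearMap.finrank_range_add_finrank_ker (φ a)
    rw [h1] at h2
    have h3 : finrank K (Fin N → K) = N := by simp [finrank_pi]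
    omega
  -- base point
  have hBne : ∃ b₀, b₀ ∈ B := by
    have hs : (Pi.single ⟨0, hN⟩ 1 : Fin N → K) ≠ 0 := by
      intro h
      have := congrFun h ⟨0, hN⟩
      simp at this
    obtain ⟨b, hb, -⟩ := hB (LinearMap.ker (φ (Pi.single ⟨0, hN⟩ 1))) (hker _ hs) 0
    exact ⟨b, hb⟩
  obtain ⟨b₀, hb₀⟩ := hBne
  set S : Finset (Fin N → K) := (B.erase b₀).image (· - b₀) with hS
  have hScard : S.card = B.card - 1 := by
    rw [hS, Finset.card_image_of_injective _ (sub_left_injective), Finset.card_erase_of_mem hb₀]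
  -- blocking property
  have hblock : ∀ a : Fin N → K, a ≠ 0 → ∃ s ∈ S, ∑ i, a i * s i = 1 := by
    intro a ha
    obtain ⟨i, hi⟩ := Function.ne_iff.mp ha
    simp only [Pi.zero_apply] at hi
    set v : Fin N → K := ((φ a b₀ + 1) / a i) • (Pi.single i 1 : Fin N → K) with hv
    have hsingle : ∑ j, a j * (Pi.single i 1 : Fin N → K) j = a i := by
      rw [Finset.sum_eq_single i]
      · simp
      · intro j _ hj; simp [Pi.single_apply, hj]
      · simp
    have hva : φ a v = φ a b₀ + 1 := by
      rw [hv, map_smul, smul_eq_mul]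
      simp only [hφapp]
      rw [hsingle]
      field_simp
    obtain ⟨b, hb, hbk⟩ := hB (LinearMap.ker (φ a)) (hker a ha) v
    rw [LinearMap.mem_ker, map_sub, sub_eq_zero, hva] at hbk
    have hbne : b ≠ b₀ := by
      intro h; rw [h] at hbk
      simp at hbk
    refine ⟨b - b₀, Finset.mem_image.mpr ⟨b, Finset.mem_erase.mpr ⟨hbne, hb⟩, rfl⟩, ?_⟩
    have : φ a (b - b₀) = 1 := by rw [map_sub, hbk]; ring
    rw [← hφapp]; exact this
  -- the polynomial
  set F : MvPolynomial (Fin N) K := ∏ s ∈ S, (1 - ∑ i, MvPolynomial.C (s i) * MvPolynomial.X i)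
    with hF
  have hFeval : ∀ a : Fin N → K, MvPolynomial.eval a F = ∏ s ∈ S, (1 - ∑ i, s i * a i) := by
    intro a
    simp [hF]
  have hF0 : MvPolynomial.eval 0 F = 1 := by
    rw [hFeval]; simp
  have hFa : ∀ a : Fin N → K, a ≠ 0 → MvPolynomial.eval a F = 0 := by
    intro a ha
    obtain ⟨s, hs, hsa⟩ := hblock a ha
    rw [hFeval]
    apply Finset.prod_eq_zero hs
    rw [show ∑ i, s i * a i = ∑ i, a i * s i by simp [mul_comm], hsa]
    ring
  -- sum of evaluations is 1
  have hsum : ∑ x : Fin N → K, MvPolynomial.eval x F = 1 := by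
    rw [← Finset.add_sum_erase _ _ (Finset.mem_univ (0 : Fin N → K)), hF0]
    rw [Finset.sum_eq_zero, add_zero]
    intro x hx
    exact hFa x (Finset.ne_of_mem_erase hx)
  -- degree bound
  have hdeg : N * (q - 1) ≤ F.totalDegree := by
    by_contra h
    push_neg at h
    have := aux_sum_eval K N F h
    rw [hsum] at this
    exact one_ne_zero this
  have hdegS : F.totalDegree ≤ S.card := by
    rw [hF]
    refine le_trans (MvPolynomial.totalDegree_finset_prod _ _) ?_
    calc ∑ s ∈ S, (1 - ∑ i, MvPolynomial.C (s i) * MvPolynomial.X i).totalDegree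
        ≤ ∑ _s ∈ S, 1 := by
          apply Finset.sum_le_sum
          intro s _
          refine le_trans (MvPolynomial.totalDegree_sub _ _) ?_
          apply max_le
          · simp [MvPolynomial.totalDegree_one]
          · refine le_trans (MvPolynomial.totalDegree_finset_sum _ _) ?_
            apply Finset.sup_le
            intro i _
            refine le_trans (MvPolynomial.totalDegree_mul _ _) ?_
            simp [MvPolynomial.totalDegree_X]
      _ = S.card := by simp
  have hB1 : 1 ≤ B.card := Finset.card_pos.mpr ⟨b₀, hb₀⟩
  omega
end

section
/- If C is a linear [n,k]_q code and c ∈ C is a maximal codeword, then the Hamming weight of c satisfies w(c) ≥ (k-1)(q-1)+1. Consequently, the minimum weight of a minimal [n,k]_q code is at least (k-1)(q-1)+1. -/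
open Module MvPolynomial Finset

-- abstract blocking lemma
lemma blocking_aux {K : Type} [Field K] [Fintype K] {k : ℕ} (hk : 2 ≤ k)
    (e : Fin k → K) (he : e ≠ 0) (T : Finset (Fin k → K))
    (h1 : ∀ v ∈ T, dotProduct e v = 1)
    (h2 : ∀ u : Fin k → K, (∀ l : K, u ≠ l • e) → ∃ v ∈ T, dotProduct u v = 0) :
    (k - 1) * (Fintype.card K - 1) + 1 ≤ T.card := by
  classical
  obtain ⟨j0, hj0⟩ : ∃ j0, e j0 ≠ 0 := Function.ne_iff.mp he
  set σ := {j : Fin k // j ≠ j0} with hσ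
  have hcardσ : Fintype.card σ = k - 1 := by
    simp [hσ, Fintype.card_subtype_compl, Fintype.card_fin]
  -- the embedding
  set φ : (σ → K) → (Fin k → K) := fun y j => if h : j = j0 then 0 else y ⟨j, h⟩ with hφ
  have hdot : ∀ (y : σ → K) (w : Fin k → K),
      dotProduct (φ y) w = ∑ s : σ, y s * w s.1 := by
    intro y w
    rw [dotProduct]
    rw [← Finset.sum_erase_add _ _ (Finset.mem_univ j0)]
    have h0 : φ y j0 * w j0 = 0 := by simp [hφ]
    rw [h0, add_zero]
    rw [Finset.sum_subtype (p := fun j => j ≠ j0) (Finset.univ.erase j0)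
      (fun x => by simp) (fun j => φ y j * w j)]
    apply Finset.sum_congr rfl
    intro s _
    simp [hφ, s.2]
  have hφne : ∀ y : σ → K, y ≠ 0 → ∀ l : K, φ y ≠ l • e := by
    intro y hy l h
    have hl : l = 0 := by
      have := congrFun h j0
      simp [hφ] at this
      rcases this with h' | h' 
      · exact h'
      · exact absurd h' hj0
    apply hy
    funext s
    have := congrFun h s.1
    simp [hφ, s.2, hl] at this
    exact this
  -- T is nonempty
  have hσne : Nonempty σ := by
    rw [← Fintype.card_pos_iff, hcardσ]; omega
  obtain ⟨s1⟩ := hσne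
  obtain ⟨v0, hv0T, _⟩ := h2 (φ (Pi.single s1 1)) (hφne _ (by
    intro h; have := congrFun h s1; simp at this))
  -- polynomial construction
  set L : (Fin k → K) → MvPolynomial σ K := fun w => ∑ s : σ, C (w s.1) * X s with hL
  have hevalL : ∀ (y : σ → K) (w : Fin k → K), eval y (L w) = dotProduct (φ y) w := by
    intro y w
    rw [hdot]
    simp [hL, mul_comm]
  set F : MvPolynomial σ K := ∏ v ∈ T.erase v0, (1 - L (v - v0)) with hF
  have hdegL : ∀ w, (L w).totalDegree ≤ 1 := by
    intro w
    refine (totalDegree_finset_sum _ _).trans ?_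
    apply Finset.sup_le
    intro s _
    refine (totalDegree_mul _ _).trans ?_
    simp [totalDegree_X]
  have hdegF : F.totalDegree ≤ T.card - 1 := by
    refine (totalDegree_finset_prod _ _).trans ?_
    have : ∀ v ∈ T.erase v0, (1 - L (v - v0)).totalDegree ≤ 1 := by
      intro v _
      refine (totalDegree_sub _ _).trans ?_
      refine max_le ?_ (hdegL _)
      simp [totalDegree_one]
    calc ∑ v ∈ T.erase v0, (1 - L (v - v0)).totalDegree
        ≤ ∑ v ∈ T.erase v0, 1 := Finset.sum_le_sum this
      _ = (T.erase v0).card := by simp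
      _ = T.card - 1 := by rw [Finset.card_erase_of_mem hv0T]
  have heval0 : eval (0 : σ → K) F = 1 := by
    rw [hF, map_prod]
    apply Finset.prod_eq_one
    intro v _
    rw [map_sub, hevalL]
    have : φ (0 : σ → K) = 0 := by funext j; simp [hφ]
    simp [this]
  have hevalne : ∀ y : σ → K, y ≠ 0 → eval y F = 0 := by
    intro y hy
    set t : K := dotProduct (φ y) v0 with ht
    have hu : ∀ l : K, φ y - (t + 1) • e ≠ l • e := by
      intro l h
      have : φ y = (l + (t+1)) • e := by
        rw [add_smul, ← h]; abel
      exact hφne y hy _ this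
    obtain ⟨v, hvT, hv⟩ := h2 _ hu
    have hev : dotProduct (φ y) v = t + 1 := by
      rw [sub_dotProduct, smul_dotProduct, h1 v hvT] at hv
      simp only [smul_eq_mul, mul_one] at hv
      linear_combination hv
    have hvne : v ≠ v0 := by
      intro h
      rw [h, ← ht] at hev
      exact absurd hev (by simp)
    rw [hF, map_prod]
    apply Finset.prod_eq_zero (Finset.mem_erase.mpr ⟨hvne, hvT⟩)
    rw [map_sub, hevalL]
    have : dotProduct (φ y) (v - v0) = 1 := by
      rw [dotProduct_sub, hev, ← ht]; ring
    simp [this]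
  -- sum over all points
  have hsum : ∑ y : σ → K, eval y F = 1 := by
    rw [Finset.sum_eq_single_of_mem (0 : σ → K) (Finset.mem_univ _)]
    · exact heval0
    · intro y _ hy; exact hevalne y hy
  by_contra hlt
  push_neg at hlt
  have hq2 : 2 ≤ Fintype.card K := Fintype.one_lt_card
  have hdeg : F.totalDegree < (Fintype.card K - 1) * Fintype.card σ := by
    rw [hcardσ]
    have h1T : 1 ≤ T.card := Finset.card_pos.mpr ⟨v0, hv0T⟩
    have : T.card ≤ (k-1) * (Fintype.card K - 1) := by omega
    calc F.totalDegree ≤ T.card - 1 := hdegF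
      _ < (Fintype.card K - 1) * (k - 1) := by
          rw [Nat.mul_comm]
          have : 1 ≤ (k-1) * (Fintype.card K - 1) := by
            apply Nat.one_le_iff_ne_zero.mpr
            have : 1 ≤ k - 1 := by omega
            have : 1 ≤ Fintype.card K - 1 := by omega
            positivity
          omega
  have := MvPolynomial.sum_eval_eq_zero F hdeg
  rw [hsum] at this
  exact one_ne_zero this

lemma maximal_weight (q n k : ℕ) (K : Type) [Field K] [Fintype K] (hK : Fintype.card K = q)
    (C : Submodule K (Fin n → K)) (hC : finrank K C = k)
    (c : Fin n → K) (hcC : c ∈ C) (hc0 : c ≠ 0)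
    (hmax : ∀ c' ∈ C, {i | c i ≠ 0} ⊆ {i | c' i ≠ 0} → ∃ lam : K, c' = lam • c) :
    (k - 1) * (q - 1) + 1 ≤ {i | c i ≠ 0}.ncard := by
  classical
  have hne : ({i | c i ≠ 0} : Set (Fin n)).Nonempty := by
    obtain ⟨i, hi⟩ := Function.ne_iff.mp hc0; exact ⟨i, hi⟩
  have hpos : 1 ≤ {i | c i ≠ 0}.ncard := (Set.ncard_pos).mpr hne
  by_cases hk1 : k ≤ 1
  · have h0 : k - 1 = 0 := by omega
    rw [h0]; simpa using hpos
  push_neg at hk1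
  subst hK
  have hk : 2 ≤ k := hk1
  let b : Basis (Fin k) K C := Module.finBasisOfFinrankEq K C hC
  set rp := b.equivFun with hrp
  set e : Fin k → K := rp ⟨c, hcC⟩ with he
  have hsymm_e : ((rp.symm e : C) : Fin n → K) = c := by
    rw [he]; simp
  have hcoord : ∀ (u : Fin k → K) (i : Fin n),
      ((rp.symm u : C) : Fin n → K) i = ∑ j, u j * ((b j : Fin n → K) i) := by
    intro u i
    rw [hrp, Basis.equivFun_symm_apply]
    push_cast
    simp
  set v : Fin n → (Fin k → K) := fun i j => (b j : Fin n → K) i * (c i)⁻¹ with hv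
  have hdotv : ∀ (u : Fin k → K) (i : Fin n),
      dotProduct u (v i) = ((rp.symm u : C) : Fin n → K) i * (c i)⁻¹ := by
    intro u i
    rw [hcoord, dotProduct, Finset.sum_mul]
    apply Finset.sum_congr rfl
    intro j _
    simp [hv]; ring
  set T : Finset (Fin k → K) := (Finset.univ.filter (fun i => c i ≠ 0)).image v with hT
  have hTS : T.card ≤ {i | c i ≠ 0}.ncard := by
    rw [Set.ncard_eq_toFinset_card']
    refine le_trans Finset.card_image_le (le_of_eq ?_)
    congr 1
    ext i
    simp
  refine le_trans ?_ hTS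
  have he0 : e ≠ 0 := by
    intro h
    apply hc0
    rw [← hsymm_e, h]
    simp
  refine blocking_aux hk e he0 T ?_ ?_
  · intro w hw
    rw [hT] at hw
    obtain ⟨i, hi, rfl⟩ := Finset.mem_image.mp hw
    rw [Finset.mem_filter] at hi
    rw [hdotv, hsymm_e]
    exact mul_inv_cancel₀ hi.2
  · intro u hu
    set x := rp.symm u with hx
    have hxl : ∀ lam : K, ((x : C) : Fin n → K) ≠ lam • c := by
      intro lam h
      apply hu lam
      have hxC : (x : C) = lam • (⟨c, hcC⟩ : C) := by
        apply Subtype.ext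
        rw [h]; rfl
      calc u = rp x := by rw [hx]; simp
        _ = lam • e := by rw [hxC, map_smul, he]
    have hnsub : ¬ ({i | c i ≠ 0} ⊆ {i | ((x : C) : Fin n → K) i ≠ 0}) := by
      intro hsub
      obtain ⟨lam, hlam⟩ := hmax _ (x : C).2 hsub
      exact hxl lam hlam
    obtain ⟨i, hi1, hi2⟩ := Set.not_subset.mp hnsub
    simp only [Set.mem_setOf_eq, not_not] at hi1 hi2
    refine ⟨v i, ?_, ?_⟩
    · rw [hT]
      exact Finset.mem_image.mpr ⟨i, Finset.mem_filter.mpr ⟨Finset.mem_univ _, hi1⟩, rfl⟩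
    · rw [hdotv, ← hx, hi2, zero_mul]

theorem stmt_14 (q n k : ℕ) (K : Type) [Field K] [Fintype K] (hK : Fintype.card K = q)
    (C : Submodule K (Fin n → K)) (hC : finrank K C = k) :
    -- every maximal codeword has weight at least (k-1)(q-1)+1
    (∀ c ∈ C, c ≠ 0 →
      (∀ c' ∈ C, {i | c i ≠ 0} ⊆ {i | c' i ≠ 0} → ∃ lam : K, c' = lam • c) →
      (k - 1) * (q - 1) + 1 ≤ {i | c i ≠ 0}.ncard) ∧
    -- consequently, the minimum weight of a minimal code is at least (k-1)(q-1)+1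
    ((∀ c ∈ C, c ≠ 0 →
        ∀ c' ∈ C, {i | c' i ≠ 0} ⊆ {i | c i ≠ 0} → ∃ lam : K, c' = lam • c) →
      ∀ c ∈ C, c ≠ 0 → (k - 1) * (q - 1) + 1 ≤ {i | c i ≠ 0}.ncard) := by
  constructor
  · intro c hcC hc0 hmax
    exact maximal_weight q n k K hK C hC c hcC hc0 hmax
  · intro H c hcC hc0
    apply maximal_weight q n k K hK C hC c hcC hc0
    intro c' hc' hsub
    have hc'0 : c' ≠ 0 := by
      obtain ⟨i, hi⟩ := Function.ne_iff.mp hc0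
      intro h
      exact (hsub hi) (by rw [h]; simp)
    obtain ⟨lam, hlam⟩ := H c' hc' hc'0 c hcC hsub
    have hlam0 : lam ≠ 0 := by
      intro h
      apply hc0
      rw [hlam, h, zero_smul]
    refine ⟨lam⁻¹, ?_⟩
    rw [hlam, smul_smul, inv_mul_cancel₀ hlam0, one_smul]
end

section
/- Let L be a higgledy-piggledy line set of PG(N,q) (i.e., the union S of the lines of L is a cutting blocking set), and suppose some hyperplane H contains exactly t lines of L. Then |L| ≥ N + t − ⌊(N−1)/q⌋. -/
open Module

section JamisonAux
open MvPolynomial Finset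

lemma jamison_core {K : Type} [Field K] [Fintype K] (n : ℕ)
    (B : Finset (Fin n → K))
    (hB : ∀ a : Fin n → K, a ≠ 0 → ∃ b ∈ B, ∑ i, a i * b i = 1) :
    (Fintype.card K - 1) * n ≤ B.card := by
  classical
  set F : MvPolynomial (Fin n) K := ∏ b ∈ B, (1 - ∑ i, C (b i) * X i) with hF
  have heval : ∀ a : Fin n → K, eval a F = ∏ b ∈ B, (1 - ∑ i, b i * a i) := by
    intro a; simp [hF]
  have h0 : eval 0 F = 1 := by rw [heval]; simp
  have hzero : ∀ a : Fin n → K, a ≠ 0 → eval a F = 0 := by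
    intro a ha
    obtain ⟨b, hb, hab⟩ := hB a ha
    rw [heval]
    refine Finset.prod_eq_zero hb ?_
    have : ∑ i, b i * a i = 1 := by rw [← hab]; exact Finset.sum_congr rfl fun i _ => mul_comm _ _
    rw [this, sub_self]
  have hdeg : F.totalDegree ≤ B.card := by
    refine (totalDegree_finset_prod _ _).trans ?_
    have : ∀ b ∈ B, (1 - ∑ i, C (b i) * X i : MvPolynomial (Fin n) K).totalDegree ≤ 1 := by
      intro b _
      refine (totalDegree_sub _ _).trans (max_le (by simp [totalDegree_one]) ?_)
      refine (totalDegree_finset_sum _ _).trans ?_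
      refine Finset.sup_le fun i _ => ?_
      refine (totalDegree_mul _ _).trans ?_
      simp [totalDegree_C, totalDegree_X]
    calc ∑ b ∈ B, (1 - ∑ i, C (b i) * X i : MvPolynomial (Fin n) K).totalDegree
        ≤ ∑ _b ∈ B, 1 := Finset.sum_le_sum this
      _ = B.card := by simp
  by_contra hlt
  push_neg at hlt
  have hFd : F.totalDegree < (Fintype.card K - 1) * Fintype.card (Fin n) := by
    rw [Fintype.card_fin]; exact lt_of_le_of_lt hdeg hlt
  have hsum := MvPolynomial.sum_eval_eq_zero F hFd
  have : ∑ x : Fin n → K, eval x F = 1 := by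
    rw [Finset.sum_eq_single (0 : Fin n → K)]
    · exact h0
    · intro a _ ha; exact hzero a ha
    · intro h; exact absurd (Finset.mem_univ _) h
  rw [this] at hsum
  exact one_ne_zero hsum

lemma jamison_affine {K : Type} [Field K] [Fintype K] (n : ℕ) (hn : 1 ≤ n)
    (B : Finset (Fin n → K))
    (hB : ∀ a : Fin n → K, a ≠ 0 → ∀ c : K, ∃ b ∈ B, ∑ i, a i * b i = c) :
    (Fintype.card K - 1) * n + 1 ≤ B.card := by
  classical
  obtain ⟨x₀, hx₀, -⟩ := hB (Pi.single ⟨0, hn⟩ 1)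
    (fun h => by simpa using congrFun h ⟨0, hn⟩) 0
  set B' : Finset (Fin n → K) := (B.image (· - x₀)).erase 0 with hB'def
  have hB' : ∀ a : Fin n → K, a ≠ 0 → ∃ b ∈ B', ∑ i, a i * b i = 1 := by
    intro a ha
    obtain ⟨b, hb, hab⟩ := hB a ha (∑ i, a i * x₀ i + 1)
    have hsum : ∑ i, a i * (b - x₀) i = 1 := by
      have : ∑ i, a i * (b - x₀) i = ∑ i, a i * b i - ∑ i, a i * x₀ i := by
        rw [← Finset.sum_sub_distrib]
        exact Finset.sum_congr rfl fun i _ => by simp [mul_sub]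
      rw [this, hab]; ring
    refine ⟨b - x₀, Finset.mem_erase.2 ⟨?_, Finset.mem_image_of_mem _ hb⟩, hsum⟩
    intro h
    rw [h] at hsum
    simp at hsum
  have h1 := jamison_core n B' hB'
  have himg : (B.image (· - x₀)).card = B.card :=
    Finset.card_image_of_injective _ (sub_left_injective)
  have h0mem : (0 : Fin n → K) ∈ B.image (· - x₀) :=
    Finset.mem_image.2 ⟨x₀, hx₀, sub_self x₀⟩
  have h2 := Finset.card_erase_of_mem h0mem
  rw [← hB'def] at h2
  have hpos := Finset.card_pos.2 ⟨(0 : Fin n → K), h0mem⟩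
  omega

end JamisonAux
open Finset

theorem stmt_17 (q N t : ℕ) (K : Type) [Field K] [Fintype K] (hK : Fintype.card K = q)
    (L : Set (Submodule K (Fin (N + 1) → K)))
    (hlines : ∀ ℓ ∈ L, finrank K ℓ = 2)
    -- the union of the lines of `L` is a cutting blocking set (higgledy-piggledy)
    (hcut : ∀ H : Submodule K (Fin (N + 1) → K), finrank K H = N →
      Submodule.span K
          (((⋃ ℓ ∈ L, (ℓ : Set (Fin (N + 1) → K))) \ {0}) ∩ (H : Set (Fin (N + 1) → K))) = H)
    -- a hyperplane `H₀` contains exactly `t` lines of `L`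
    (H₀ : Submodule K (Fin (N + 1) → K)) (hH₀ : finrank K H₀ = N)
    (ht : {ℓ ∈ L | ℓ ≤ H₀}.ncard = t) :
    N + t - (N - 1) / q ≤ L.ncard := by
  classical
  have hq0 : 0 < q := hK ▸ Fintype.card_pos
  haveI : Finite (Submodule K (Fin (N+1) → K)) :=
    Finite.of_injective (fun p => (p : Set (Fin (N+1) → K))) SetLike.coe_injective
  have hLfin : L.Finite := Set.toFinite L
  have htle : t ≤ L.ncard := by
    rw [← ht]; exact Set.ncard_le_ncard (Set.sep_subset _ _) hLfin
  rcases Nat.eq_zero_or_pos N with hN0 | hN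
  · subst hN0; simpa using htle
  set S : Set (Fin (N+1) → K) := ⋃ ℓ ∈ L, (ℓ : Set _) with hSdef
  have hrkV : finrank K (Fin (N+1) → K) = N + 1 := Module.finrank_fin_fun K
  -- construct φ with ker φ = H₀
  have hq1 : finrank K ((Fin (N+1) → K) ⧸ H₀) = 1 := by
    have := Submodule.finrank_quotient_add_finrank H₀
    rw [hrkV, hH₀] at this; omega
  obtain ⟨e⟩ := FiniteDimensional.nonempty_linearEquiv_of_finrank_eq
    (R := K) (M := (Fin (N+1) → K) ⧸ H₀) (M' := K) (by rw [hq1, finrank_self])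
  set φ : (Fin (N+1) → K) →ₗ[K] K := e.toLinearMap ∘ₗ H₀.mkQ with hφdef
  have hkerφ : LinearMap.ker φ = H₀ := by
    rw [hφdef, LinearMap.ker_comp, LinearEquiv.ker, Submodule.comap_bot, Submodule.ker_mkQ]
  have hmemφ : ∀ v, v ∈ H₀ → φ v = 0 := fun v hv => LinearMap.mem_ker.1 (hkerφ.symm ▸ hv)
  obtain ⟨u, hu⟩ : ∃ u, φ u = 1 := by
    obtain ⟨y, hy⟩ := e.surjective 1
    obtain ⟨u, hu⟩ := Submodule.mkQ_surjective H₀ y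
    exact ⟨u, by rw [hφdef]; simp [hu, hy]⟩
  set b := Module.finBasisOfFinrankEq K H₀ hH₀ with hbdef
  set κ : (Fin N → K) → (Fin (N+1) → K) := fun x => u + (b.equivFun.symm x : Fin (N+1) → K)
    with hκdef
  have hφκ : ∀ x, φ (κ x) = 1 := by
    intro x
    rw [hκdef]
    simp only [map_add, hu]
    rw [hmemφ _ (b.equivFun.symm x).2, add_zero]
  have hκinj : Function.Injective κ := by
    intro x y h
    have h2 : ((b.equivFun.symm x : H₀) : Fin (N+1) → K) = (b.equivFun.symm y : H₀) :=
      add_left_cancel h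
    have h3 : (b.equivFun.symm x : H₀) = b.equivFun.symm y := Subtype.coe_injective h2
    exact b.equivFun.symm.injective h3
  -- the projection π : V →ₗ H₀
  set p : (Fin (N+1) → K) →ₗ[K] (Fin (N+1) → K) := LinearMap.id - φ.smulRight u with hpdef
  have hpval : ∀ v, p v = v - φ v • u := fun v => by rw [hpdef]; simp
  have hpmem : ∀ v, p v ∈ H₀ := by
    intro v
    rw [← hkerφ, LinearMap.mem_ker, hpval, map_sub, map_smul, smul_eq_mul, hu, mul_one, sub_self]
  set π : (Fin (N+1) → K) →ₗ[K] H₀ := p.codRestrict H₀ hpmem with hπdef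
  have hπcoe : ∀ v, ((π v : H₀) : Fin (N+1) → K) = v - φ v • u := fun v => by
    rw [hπdef, LinearMap.codRestrict_apply, hpval]
  have hrep : ∀ v, φ v = 1 → κ (fun i => b.repr (π v) i) = v := by
    intro v hv
    have h1 : (fun i => b.repr (π v) i) = b.equivFun (π v) := by
      funext i; rw [Basis.equivFun_apply]
    rw [hκdef]
    simp only [h1, LinearEquiv.symm_apply_apply]
    rw [hπcoe, hv, one_smul]
    abel
  have hπb : ∀ j, π (b j : Fin (N+1) → K) = b j := by
    intro j
    have hc : ((π (b j : Fin (N+1) → K) : H₀) : Fin (N+1) → K) = b j := by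
      rw [hπcoe, hmemφ _ (b j).2, zero_smul, sub_zero]
    exact Subtype.coe_injective hc
  -- blocking in coordinates
  have hblock : ∀ a : Fin N → K, a ≠ 0 → ∀ cc : K,
      ∃ x : Fin N → K, κ x ∈ S ∧ ∑ i, a i * x i = cc := by
    intro a ha cc
    obtain ⟨j, hj⟩ : ∃ j, a j ≠ 0 := by
      by_contra h
      push_neg at h
      exact ha (funext h)
    set ψ : (Fin (N+1) → K) →ₗ[K] K :=
      (∑ i, a i • ((b.coord i).comp π)) - cc • φ with hψdef
    have hψval : ∀ v, ψ v = (∑ i, a i * b.repr (π v) i) - cc * φ v := by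
      intro v
      rw [hψdef]
      simp [LinearMap.sum_apply, Basis.coord_apply]
    have hψb : ∀ j', ψ (b j' : Fin (N+1) → K) = a j' := by
      intro j'
      rw [hψval, hπb, hmemφ _ (b j').2, mul_zero, sub_zero]
      simp [Basis.repr_self, Finsupp.single_apply]
    have hrange : LinearMap.range ψ = ⊤ := by
      rw [eq_top_iff]
      intro z _
      have h1 : a j ∈ LinearMap.range ψ := ⟨b j, hψb j⟩
      have h2 := Submodule.smul_mem _ (z * (a j)⁻¹) h1
      rwa [smul_eq_mul, mul_assoc, inv_mul_cancel₀ hj, mul_one] at h2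
    have hker : finrank K (LinearMap.ker ψ) = N := by
      have h1 := LinearMap.finrank_range_add_finrank_ker ψ
      rw [hrange, finrank_top, finrank_self, hrkV] at h1
      omega
    have hspan := hcut (LinearMap.ker ψ) hker
    have hex : ∃ s ∈ (S \ {0}) ∩ (LinearMap.ker ψ : Set (Fin (N+1) → K)), φ s ≠ 0 := by
      by_contra h
      push_neg at h
      have hsub : (S \ {0}) ∩ (LinearMap.ker ψ : Set (Fin (N+1) → K)) ⊆ (H₀ : Set _) := by
        intro s hs
        rw [SetLike.mem_coe, ← hkerφ, LinearMap.mem_ker]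
        exact h s hs
      have hle : LinearMap.ker ψ ≤ H₀ := by
        rw [← hspan]
        exact Submodule.span_le.2 hsub
      have heq : LinearMap.ker ψ = H₀ :=
        Submodule.eq_of_le_of_finrank_le hle (by rw [hker, hH₀])
      have : (b j : Fin (N+1) → K) ∈ LinearMap.ker ψ := heq.symm ▸ (b j).2
      rw [LinearMap.mem_ker, hψb] at this
      exact hj this
    obtain ⟨s, ⟨⟨hsS, _⟩, hsker⟩, hsφ⟩ := hex
    set s' : Fin (N+1) → K := (φ s)⁻¹ • s with hs'def
    have hφs' : φ s' = 1 := by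
      rw [hs'def, map_smul, smul_eq_mul, inv_mul_cancel₀ hsφ]
    have hs'S : s' ∈ S := by
      rw [hSdef] at hsS ⊢
      simp only [Set.mem_iUnion] at hsS ⊢
      obtain ⟨ℓ, hℓ, hsℓ⟩ := hsS
      exact ⟨ℓ, hℓ, Submodule.smul_mem ℓ _ hsℓ⟩
    have hs'ker : s' ∈ LinearMap.ker ψ := Submodule.smul_mem _ _ hsker
    refine ⟨fun i => b.repr (π s') i, ?_, ?_⟩
    · rw [hrep s' hφs']; exact hs'S
    · have := LinearMap.mem_ker.1 hs'ker
      rw [hψval, hφs', mul_one, sub_eq_zero] at this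
      exact this
  -- lower bound on the number of chart points of S
  set Bhat : Finset (Fin N → K) := Finset.univ.filter (fun x => κ x ∈ S) with hBhatdef
  have hlow : (q - 1) * N + 1 ≤ Bhat.card := by
    rw [← hK]
    refine jamison_affine N hN Bhat ?_
    intro a ha cc
    obtain ⟨x, hx, hs⟩ := hblock a ha cc
    exact ⟨x, Finset.mem_filter.2 ⟨Finset.mem_univ _, hx⟩, hs⟩
  -- upper bound
  set L₁ : Set (Submodule K (Fin (N+1) → K)) := {ℓ ∈ L | ¬ ℓ ≤ H₀} with hL₁def
  have hL₁fin : L₁.Finite := Set.toFinite _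
  have hsubset : Bhat ⊆ hL₁fin.toFinset.biUnion
      (fun ℓ => Finset.univ.filter (fun x => κ x ∈ ℓ)) := by
    intro x hx
    have hxS : κ x ∈ S := (Finset.mem_filter.1 hx).2
    rw [hSdef] at hxS
    simp only [Set.mem_iUnion] at hxS
    obtain ⟨ℓ, hℓ, hxℓ⟩ := hxS
    have hℓ1 : ℓ ∈ L₁ := by
      refine ⟨hℓ, fun hle => ?_⟩
      have : κ x ∈ H₀ := hle hxℓ
      have := hmemφ _ this
      rw [hφκ] at this
      exact one_ne_zero this
    exact Finset.mem_biUnion.2 ⟨ℓ, hL₁fin.mem_toFinset.2 hℓ1, Finset.mem_filter.2 ⟨Finset.mem_univ _, hxℓ⟩⟩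
  have hfiber : ∀ ℓ ∈ hL₁fin.toFinset,
      (Finset.univ.filter (fun x => κ x ∈ ℓ)).card ≤ q := by
    intro ℓ hℓ
    obtain ⟨hℓL, hℓH⟩ : ℓ ∈ L ∧ ¬ ℓ ≤ H₀ := hL₁fin.mem_toFinset.1 hℓ
    set Aℓ : Finset (Fin (N+1) → K) := Finset.univ.filter (fun v => v ∈ ℓ ∧ φ v = 1) with hAdef
    have h1 : (Finset.univ.filter (fun x => κ x ∈ ℓ)).card ≤ Aℓ.card := by
      refine Finset.card_le_card_of_injOn κ ?_ hκinj.injOn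
      intro x hx
      exact Finset.mem_filter.2 ⟨Finset.mem_univ _, (Finset.mem_filter.1 hx).2, hφκ x⟩
    refine h1.trans ?_
    rcases Aℓ.eq_empty_or_nonempty with hA | ⟨v₂, hv₂⟩
    · rw [hA]; simpa using hq0.le
    obtain ⟨hv₂ℓ, hv₂φ⟩ := (Finset.mem_filter.1 hv₂).2
    have h2 : Aℓ.card ≤ (Finset.univ.filter (fun v => v ∈ ℓ ⊓ H₀)).card := by
      refine Finset.card_le_card_of_injOn (· - v₂) ?_ (sub_left_injective.injOn)
      intro v hv
      obtain ⟨hvℓ, hvφ⟩ := (Finset.mem_filter.1 hv).2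
      refine Finset.mem_filter.2 ⟨Finset.mem_univ _, Submodule.mem_inf.2 ⟨?_, ?_⟩⟩
      · exact Submodule.sub_mem ℓ hvℓ hv₂ℓ
      · rw [← hkerφ, LinearMap.mem_ker, map_sub, hvφ, hv₂φ, sub_self]
    refine h2.trans ?_
    have h3 : (Finset.univ.filter (fun v => v ∈ ℓ ⊓ H₀)).card = Fintype.card ↥(ℓ ⊓ H₀) :=
      (Fintype.card_subtype _).symm
    have h4 : finrank K ↥(ℓ ⊓ H₀) ≤ 1 := by
      have hlt : ℓ ⊓ H₀ < ℓ := lt_of_le_of_ne inf_le_left (fun h => hℓH (inf_eq_left.1 h))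
      have := Submodule.finrank_lt_finrank_of_lt (s := ℓ ⊓ H₀) (t := ℓ) hlt
      rw [hlines ℓ hℓL] at this
      omega
    rw [h3, card_eq_pow_finrank (K := K) (V := ↥(ℓ ⊓ H₀)), hK]
    calc q ^ finrank K ↥(ℓ ⊓ H₀) ≤ q ^ 1 := Nat.pow_le_pow_right hq0 h4
      _ = q := pow_one q
  have hup : Bhat.card ≤ hL₁fin.toFinset.card * q := by
    refine (Finset.card_le_card hsubset).trans ?_
    refine (Finset.card_biUnion_le).trans ?_
    calc ∑ ℓ ∈ hL₁fin.toFinset, (Finset.univ.filter (fun x => κ x ∈ ℓ)).card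
        ≤ ∑ _ℓ ∈ hL₁fin.toFinset, q := Finset.sum_le_sum hfiber
      _ = hL₁fin.toFinset.card * q := by rw [Finset.sum_const, smul_eq_mul]
  -- numeric conclusion
  obtain ⟨m, hmF⟩ : ∃ m, hL₁fin.toFinset.card = m := ⟨_, rfl⟩
  have hm2 : L₁.ncard = m := by rw [Set.ncard_eq_toFinset_card L₁ hL₁fin, hmF]
  have hmain : (q - 1) * N + 1 ≤ m * q := by
    rw [← hmF]; exact hlow.trans hup
  have hkey : N - (N - 1) / q ≤ m := by
    rcases le_or_gt N m with h | h
    · exact le_trans (Nat.sub_le _ _) h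
    have e1 : (N - m) * q + m * q = N * q := by
      rw [← Nat.add_mul, Nat.sub_add_cancel h.le]
    have e2 : (q - 1) * N = N * q - N := by
      rw [Nat.sub_mul, one_mul, Nat.mul_comm]
    have e3 : N ≤ N * q := Nat.le_mul_of_pos_right N hq0
    have h5 : (N - m) * q ≤ N - 1 := by
      rw [e2] at hmain
      generalize hA : N * q = A at e1 e3 hmain
      generalize hB : m * q = B at e1 hmain
      generalize hC : (N - m) * q = C at e1
      omega
    have h6 : N - m ≤ (N - 1) / q := (Nat.le_div_iff_mul_le hq0).2 h5
    generalize hD : (N - 1) / q = D at h6 ⊢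
    omega
  -- split L
  have hdisj : Disjoint {ℓ ∈ L | ℓ ≤ H₀} L₁ := by
    rw [Set.disjoint_left]
    rintro ℓ ⟨-, h1⟩ ⟨-, h2⟩
    exact h2 h1
  have hunion : {ℓ ∈ L | ℓ ≤ H₀} ∪ L₁ = L := by
    ext ℓ
    constructor
    · rintro (⟨h, -⟩ | ⟨h, -⟩) <;> exact h
    · intro h
      by_cases hc : ℓ ≤ H₀
      · exact Or.inl ⟨h, hc⟩
      · exact Or.inr ⟨h, hc⟩
  have hcard : L.ncard = t + m := by
    rw [← hunion, Set.ncard_union_eq hdisj (Set.toFinite _) (Set.toFinite _), ht, hm2]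
  have hdle : (N - 1) / q ≤ N := le_trans (Nat.div_le_self _ _) (Nat.sub_le _ _)
  generalize hD : (N - 1) / q = D at hkey hdle ⊢
  omega
end

section
/- Every set of lines of PG(N,q) in higgledy-piggledy arrangement contains at least N + ⌊N/2⌋ − ⌊(N−1)/q⌋ lines. In particular, if q ≥ N, such a set contains at least N + ⌊N/2⌋ lines. -/
set_option maxHeartbeats 1000000
set_option synthInstance.maxHeartbeats 1000000

open Module

namespace HPAux

variable {K : Type} [Field K] [Fintype K]

/-- exponent reduction mod `q-1`, keeping positivity -/
def rexp (q a : ℕ) : ℕ := if a = 0 then 0 else (a - 1) % (q - 1) + 1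

lemma rexp_zero (q : ℕ) : rexp q 0 = 0 := rfl

lemma rexp_le {q : ℕ} (hq : 2 ≤ q) (a : ℕ) : rexp q a ≤ q - 1 := by
  unfold rexp
  split
  · omega
  · have := Nat.mod_lt (a-1) (show 0 < q - 1 by omega)
    omega

lemma rexp_pos {q a : ℕ} (ha : a ≠ 0) : rexp q a ≠ 0 := by unfold rexp; simp [ha]

lemma rexp_mod {q : ℕ} (hq : 2 ≤ q) {a : ℕ} (ha : a ≠ 0) :
    ∃ t, a = (q-1) * t + rexp q a := by
  unfold rexp
  simp only [ha, if_false]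
  have h := Nat.div_add_mod (a-1) (q-1)
  exact ⟨(a-1)/(q-1), by omega⟩

lemma rexp_ge {q a : ℕ} (hq : 2 ≤ q) (h : rexp q a = q - 1) : q - 1 ≤ a := by
  rcases eq_or_ne a 0 with rfl | ha
  · rw [rexp_zero] at h; omega
  · obtain ⟨t, ht⟩ := rexp_mod hq ha
    omega

lemma rexp_qsub1 {q : ℕ} (hq : 2 ≤ q) : rexp q (q-1) = q - 1 := by
  unfold rexp
  have h1 : q - 1 ≠ 0 := by omega
  simp only [h1, if_false]
  rw [Nat.mod_eq_of_lt (by omega)]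
  omega

lemma pow_rexp (hq : 2 ≤ Fintype.card K) (x : K) (a : ℕ) :
    x ^ a = x ^ rexp (Fintype.card K) a := by
  set q := Fintype.card K with hqdef
  rcases eq_or_ne a 0 with rfl | ha
  · rfl
  rcases eq_or_ne x 0 with rfl | hx
  · rw [zero_pow ha, zero_pow (rexp_pos ha)]
  obtain ⟨t, ht⟩ := rexp_mod hq ha
  calc x ^ a = x ^ ((q-1)*t) * x ^ rexp q a := by rw [← pow_add, ← ht]
  _ = ((x^(q-1))^t) * x ^ rexp q a := by rw [pow_mul]
  _ = x ^ rexp q a := by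
      rw [hqdef, FiniteField.pow_card_sub_one_eq_one x hx, one_pow, one_mul]

variable {u : ℕ}

/-- reduce a polynomial to one with all exponents at most `q - 1` -/
noncomputable def reduceP (p : MvPolynomial (Fin u) K) : MvPolynomial (Fin u) K :=
  ∑ a ∈ p.support,
    MvPolynomial.monomial (Finsupp.mapRange (rexp (Fintype.card K)) (rexp_zero _) a)
      (MvPolynomial.coeff a p)

lemma eval_reduceP (hq : 2 ≤ Fintype.card K) (p : MvPolynomial (Fin u) K) (g : Fin u → K) :
    MvPolynomial.eval g (reduceP p) = MvPolynomial.eval g p := by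
  rw [reduceP, map_sum, MvPolynomial.eval_eq' g p]
  refine Finset.sum_congr rfl fun a _ => ?_
  rw [MvPolynomial.eval_monomial]
  congr 1
  rw [Finsupp.prod_fintype _ _ (fun i => pow_zero _)]
  refine Finset.prod_congr rfl fun i _ => ?_
  rw [Finsupp.mapRange_apply, ← pow_rexp hq]

lemma reduceP_mem (hq : 2 ≤ Fintype.card K) (p : MvPolynomial (Fin u) K) :
    reduceP p ∈ MvPolynomial.restrictDegree (Fin u) K (Fintype.card K - 1) := by
  classical
  refine Submodule.sum_mem _ fun a _ => ?_
  rw [MvPolynomial.mem_restrictDegree]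
  intro s hs i
  rw [MvPolynomial.support_monomial] at hs
  split at hs
  · exact absurd hs (by simp)
  · rw [Finset.mem_singleton] at hs
    subst hs
    rw [Finsupp.mapRange_apply]
    exact rexp_le hq _

/-- the top monomial: all exponents `q - 1` -/
noncomputable def muF (u : ℕ) (q : ℕ) : Fin u →₀ ℕ :=
  Finsupp.equivFunOnFinite.symm (fun _ => q - 1)

lemma muF_apply (i : Fin u) (q : ℕ) : muF u q i = q - 1 := rfl

lemma degsum_eq (d : Fin u →₀ ℕ) : ∑ i ∈ d.support, d i = ∑ i : Fin u, d i := by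
  refine Finset.sum_subset (Finset.subset_univ _) fun i _ hi => ?_
  simpa using Finsupp.notMem_support_iff.mp hi

lemma muF_degsum (hq : 2 ≤ Fintype.card K) :
    ∑ i ∈ (muF u (Fintype.card K)).support, (muF u (Fintype.card K)) i
      = u * (Fintype.card K - 1) := by
  rw [degsum_eq]
  simp [muF_apply, Finset.sum_const, mul_comm]

lemma coeff_muF_reduceP (hq : 2 ≤ Fintype.card K) (p : MvPolynomial (Fin u) K)
    (hdeg : p.totalDegree ≤ u * (Fintype.card K - 1)) :
    MvPolynomial.coeff (muF u (Fintype.card K)) (reduceP p)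
      = MvPolynomial.coeff (muF u (Fintype.card K)) p := by
  classical
  set q := Fintype.card K with hqdef
  set μ := muF u q with hμ
  rw [reduceP, MvPolynomial.coeff_sum]
  have key : ∀ a ∈ p.support,
      Finsupp.mapRange (rexp q) (rexp_zero _) a = μ ↔ a = μ := by
    intro a ha
    constructor
    · intro h
      have h1 : ∀ i, rexp q (a i) = q - 1 := by
        intro i
        have := congrArg (fun f => f i) h
        simpa [Finsupp.mapRange_apply, hμ, muF_apply] using this
      have h2 : ∀ i, q - 1 ≤ a i := fun i => rexp_ge hq (h1 i)
      have h3 : ∑ i : Fin u, a i ≤ u * (q - 1) := by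
        have := MvPolynomial.le_totalDegree ha
        rw [Finsupp.sum, degsum_eq] at this
        omega
      have h4 : ∀ i, a i = q - 1 := by
        by_contra hc
        push_neg at hc
        obtain ⟨i0, hi0⟩ := hc
        have hlt : ∑ i : Fin u, (q - 1 : ℕ) < ∑ i : Fin u, a i := by
          refine Finset.sum_lt_sum (fun i _ => h2 i) ⟨i0, Finset.mem_univ _, ?_⟩
          exact lt_of_le_of_ne (h2 i0) (Ne.symm hi0)
        simp only [Finset.sum_const, Finset.card_univ, Fintype.card_fin, smul_eq_mul] at hlt
        omega
      ext i
      rw [h4 i, hμ, muF_apply]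
    · rintro rfl
      ext i
      rw [Finsupp.mapRange_apply, hμ, muF_apply, rexp_qsub1 hq]
  calc (∑ a ∈ p.support,
        MvPolynomial.coeff μ (MvPolynomial.monomial (Finsupp.mapRange (rexp q) rfl a)
          (MvPolynomial.coeff a p)))
      = ∑ a ∈ p.support, if a = μ then MvPolynomial.coeff a p else 0 := by
        refine Finset.sum_congr rfl fun a ha => ?_
        rw [MvPolynomial.coeff_monomial]
        by_cases h : a = μ
        · rw [if_pos h, if_pos ((key a ha).mpr h)]
        · rw [if_neg h, if_neg (fun hc => h ((key a ha).mp hc))]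
    _ = if μ ∈ p.support then MvPolynomial.coeff μ p else 0 := by
        rw [Finset.sum_ite_eq' p.support μ (fun a => MvPolynomial.coeff a p)]
    _ = MvPolynomial.coeff μ p := by
        split
        · rfl
        · next h => rw [MvPolynomial.notMem_support_iff.mp h]

lemma prod_monomial {ι : Type} (s : Finset ι) (f : ι → (Fin u →₀ ℕ)) (c : ι → K) :
    ∏ i ∈ s, (MvPolynomial.monomial (f i) (c i)) =
      MvPolynomial.monomial (∑ i ∈ s, f i) (∏ i ∈ s, c i) := by
  classical
  induction s using Finset.induction with
  | empty => simp [MvPolynomial.monomial_zero']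
  | insert x s hx ih =>
      rw [Finset.prod_insert hx, ih, Finset.sum_insert hx, Finset.prod_insert hx,
        MvPolynomial.monomial_mul]

lemma neg_X_pow_eq (i : Fin u) (e : ℕ) :
    -(MvPolynomial.X i ^ e : MvPolynomial (Fin u) K)
      = MvPolynomial.monomial (Finsupp.single i e) (-1 : K) := by
  rw [MvPolynomial.X_pow_eq_monomial, ← map_neg]

lemma coeff_muF_D (hq : 2 ≤ Fintype.card K) :
    MvPolynomial.coeff (muF u (Fintype.card K))
      (∏ i : Fin u, ((1 : MvPolynomial (Fin u) K) - MvPolynomial.X i ^ (Fintype.card K - 1)))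
      = (-1 : K)^u := by
  classical
  set q := Fintype.card K with hqdef
  have he : q - 1 ≠ 0 := by omega
  have hrw : ∀ i : Fin u, ((1 : MvPolynomial (Fin u) K) - MvPolynomial.X i ^ (q-1))
      = 1 + (-(MvPolynomial.X i ^ (q-1))) := fun i => sub_eq_add_neg _ _
  simp_rw [hrw]
  rw [Finset.prod_add, MvPolynomial.coeff_sum]
  have hterm : ∀ t ∈ Finset.univ.powerset (α := Fin u),
      MvPolynomial.coeff (muF u q)
        ((∏ _i ∈ t, (1 : MvPolynomial (Fin u) K)) *
          ∏ i ∈ Finset.univ \ t, (-(MvPolynomial.X i ^ (q-1))))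
      = if t = ∅ then (-1:K)^u else 0 := by
    intro t _
    rw [Finset.prod_const_one, one_mul]
    simp_rw [neg_X_pow_eq]
    rw [prod_monomial, MvPolynomial.coeff_monomial, Finset.prod_const]
    have happ : ∀ j : Fin u, (∑ i ∈ Finset.univ \ t, Finsupp.single i (q-1)) j
        = if j ∈ Finset.univ \ t then q - 1 else 0 := by
      intro j
      rw [Finset.sum_apply']
      simp_rw [Finsupp.single_apply]
      rw [Finset.sum_ite_eq' (Finset.univ \ t) j (fun _ => q - 1)]
    by_cases ht : t = ∅
    · subst ht
      rw [if_pos, if_pos rfl]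
      · rw [Finset.sdiff_empty, Finset.card_univ, Fintype.card_fin]
      · ext j
        rw [happ j, muF_apply]
        simp
    · rw [if_neg, if_neg ht]
      intro hc
      obtain ⟨j, hj⟩ := Finset.nonempty_iff_ne_empty.mpr ht
      have := congrArg (fun f => f j) hc
      simp only [happ j, muF_apply] at this
      rw [if_neg (by simp [hj])] at this
      omega
  rw [Finset.sum_congr rfl hterm, Finset.sum_ite_eq' _ ∅ (fun _ => (-1:K)^u)]
  rw [if_pos (Finset.empty_mem_powerset _)]

lemma rainbow {m : ℕ} (hu : 1 ≤ u) (ψ : Fin m → Fin u → K)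
    (hyp : ∀ g : Fin u → K, g ≠ 0 → ∀ c : K, ∃ ℓ, (∑ i, ψ ℓ i * g i) = c) :
    u * (Fintype.card K - 1) + 1 ≤ m := by
  classical
  set q := Fintype.card K with hqdef
  have hq : 2 ≤ q := Fintype.one_lt_card
  by_contra hcon
  push_neg at hcon
  have hm : m ≤ u * (q-1) := by omega
  have hone : (fun _ : Fin u => (1:K)) ≠ 0 := by
    intro h
    have := congrFun h ⟨0, hu⟩
    simpa using this
  have hm1 : 1 ≤ m := by
    obtain ⟨ℓ, -⟩ := hyp _ hone 0
    exact ℓ.pos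
  set Lp : Fin m → MvPolynomial (Fin u) K :=
    fun ℓ => ∑ i, MvPolynomial.C (ψ ℓ i) * MvPolynomial.X i with hLp
  have evalLp : ∀ (g : Fin u → K) ℓ, MvPolynomial.eval g (Lp ℓ) = ∑ i, ψ ℓ i * g i := by
    intro g ℓ; simp [hLp]
  have degLp : ∀ ℓ, (Lp ℓ).totalDegree ≤ 1 := by
    intro ℓ
    refine le_trans (MvPolynomial.totalDegree_finset_sum _ _) ?_
    refine Finset.sup_le fun i _ => ?_
    refine le_trans (MvPolynomial.totalDegree_mul _ _) ?_
    rw [MvPolynomial.totalDegree_C, MvPolynomial.totalDegree_X]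
  have degnegLp : ∀ ℓ, (-(Lp ℓ)).totalDegree ≤ 1 := by
    intro ℓ; rw [MvPolynomial.totalDegree_neg]; exact degLp ℓ
  set μ := muF u q with hμ
  have hμsum : ∑ i ∈ μ.support, μ i = u * (q - 1) := muF_degsum hq
  set G : MvPolynomial (Fin u) K := ∏ ℓ : Fin m, (1 - Lp ℓ) with hG
  have evalG : ∀ g : Fin u → K, MvPolynomial.eval g G = if g = 0 then 1 else 0 := by
    intro g
    rw [hG, map_prod]
    split
    · next hg =>
        subst hg
        refine Finset.prod_eq_one fun ℓ _ => ?_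
        rw [map_sub, map_one, evalLp]
        simp
    · next hg =>
        obtain ⟨ℓ, hℓ⟩ := hyp g hg 1
        refine Finset.prod_eq_zero (Finset.mem_univ ℓ) ?_
        rw [map_sub, map_one, evalLp, hℓ, sub_self]
  set D : MvPolynomial (Fin u) K :=
    ∏ i : Fin u, ((1 : MvPolynomial (Fin u) K) - MvPolynomial.X i ^ (q-1)) with hD
  have evalD : ∀ g : Fin u → K, MvPolynomial.eval g D = if g = 0 then 1 else 0 := by
    intro g
    rw [hD, map_prod]
    split
    · next hg =>
        subst hg
        refine Finset.prod_eq_one fun i _ => ?_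
        rw [map_sub, map_one, map_pow, MvPolynomial.eval_X]
        simp [zero_pow (show q - 1 ≠ 0 by omega)]
    · next hg =>
        have : ∃ i, g i ≠ 0 := by
          by_contra hc
          push_neg at hc
          exact hg (funext hc)
        obtain ⟨i, hi⟩ := this
        refine Finset.prod_eq_zero (Finset.mem_univ i) ?_
        rw [map_sub, map_one, map_pow, MvPolynomial.eval_X,
          FiniteField.pow_card_sub_one_eq_one (g i) hi, sub_self]
  have degG : G.totalDegree ≤ m := by
    rw [hG]
    refine le_trans (MvPolynomial.totalDegree_finset_prod _ _) ?_
    calc ∑ ℓ : Fin m, (1 - Lp ℓ).totalDegree ≤ ∑ _ℓ : Fin m, 1 := by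
          refine Finset.sum_le_sum fun ℓ _ => ?_
          rw [sub_eq_add_neg]
          refine le_trans (MvPolynomial.totalDegree_add _ _) ?_
          rw [MvPolynomial.totalDegree_one]
          simpa using degnegLp ℓ
      _ = m := by simp
  have degD : D.totalDegree ≤ u * (q - 1) := by
    rw [hD]
    refine le_trans (MvPolynomial.totalDegree_finset_prod _ _) ?_
    calc ∑ i : Fin u, ((1 : MvPolynomial (Fin u) K) - MvPolynomial.X i ^ (q-1)).totalDegree
        ≤ ∑ _i : Fin u, (q-1) := by
          refine Finset.sum_le_sum fun i _ => ?_
          rw [sub_eq_add_neg]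
          refine le_trans (MvPolynomial.totalDegree_add _ _) ?_
          rw [MvPolynomial.totalDegree_one, MvPolynomial.totalDegree_neg]
          simpa using MvPolynomial.totalDegree_pow _ _ |>.trans
            (by rw [MvPolynomial.totalDegree_X]; omega)
      _ = u * (q-1) := by simp [mul_comm]
  have hGD : reduceP G = reduceP D := by
    have hmem := Submodule.sub_mem _ (reduceP_mem hq G) (reduceP_mem hq D)
    have hz := MvPolynomial.eq_zero_of_eval_eq_zero (Fin u) K (reduceP G - reduceP D)
      (fun v => by rw [map_sub, eval_reduceP hq, eval_reduceP hq, evalG, evalD, sub_self]) hmem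
    exact sub_eq_zero.mp hz
  have hcoeffG : MvPolynomial.coeff μ G = (-1:K)^u := by
    rw [← coeff_muF_reduceP hq G (le_trans degG hm), hGD,
      coeff_muF_reduceP hq D degD]
    exact coeff_muF_D hq
  have hne : ((-1:K)^u) ≠ 0 := pow_ne_zero _ (neg_ne_zero.mpr one_ne_zero)
  rcases lt_or_eq_of_le hm with hlt | heq
  · have h0 : MvPolynomial.coeff μ G = 0 := by
      refine MvPolynomial.coeff_eq_zero_of_totalDegree_lt ?_
      rw [hμsum]
      omega
    rw [hcoeffG] at h0
    exact hne h0
  · set F : MvPolynomial (Fin u) K := ∏ ℓ : Fin m, Lp ℓ with hF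
    have evalF : ∀ g : Fin u → K, MvPolynomial.eval g F = 0 := by
      intro g
      rcases eq_or_ne g 0 with rfl | hg
      · rw [hF, map_prod]
        refine Finset.prod_eq_zero (Finset.mem_univ (⟨0, hm1⟩ : Fin m)) ?_
        rw [evalLp]
        simp
      · obtain ⟨ℓ, hℓ⟩ := hyp g hg 0
        rw [hF, map_prod]
        exact Finset.prod_eq_zero (Finset.mem_univ ℓ) (by rw [evalLp, hℓ])
    have degF : F.totalDegree ≤ m := by
      rw [hF]
      refine le_trans (MvPolynomial.totalDegree_finset_prod _ _) ?_
      calc ∑ ℓ : Fin m, (Lp ℓ).totalDegree ≤ ∑ _ℓ : Fin m, 1 :=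
            Finset.sum_le_sum fun ℓ _ => degLp ℓ
        _ = m := by simp
    have hFred : reduceP F = 0 :=
      MvPolynomial.eq_zero_of_eval_eq_zero (Fin u) K (reduceP F)
        (fun v => by rw [eval_reduceP hq, evalF]) (reduceP_mem hq F)
    have hcF : MvPolynomial.coeff μ F = 0 := by
      rw [← coeff_muF_reduceP hq F (le_trans degF hm), hFred, MvPolynomial.coeff_zero]
    have hexp : MvPolynomial.coeff μ G = (-1:K)^m * MvPolynomial.coeff μ F := by
      rw [hG]
      have hrw : ∀ ℓ : Fin m, (1 : MvPolynomial (Fin u) K) - Lp ℓ = 1 + (- Lp ℓ) :=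
        fun ℓ => sub_eq_add_neg _ _
      simp_rw [hrw]
      rw [Finset.prod_add, MvPolynomial.coeff_sum]
      have hterm : ∀ t ∈ Finset.univ.powerset (α := Fin m),
          MvPolynomial.coeff μ
            ((∏ _ℓ ∈ t, (1 : MvPolynomial (Fin u) K)) * ∏ ℓ ∈ Finset.univ \ t, (- Lp ℓ))
          = if t = ∅ then (-1:K)^m * MvPolynomial.coeff μ F else 0 := by
        intro t _
        rw [Finset.prod_const_one, one_mul]
        by_cases ht : t = ∅
        · subst ht
          rw [if_pos rfl, Finset.sdiff_empty]
          have : ∏ ℓ : Fin m, (- Lp ℓ) = (-1:MvPolynomial (Fin u) K)^m * F := by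
            rw [hF]
            have hneg : ∀ ℓ : Fin m, - Lp ℓ = (-1 : MvPolynomial (Fin u) K) * Lp ℓ :=
              fun ℓ => by ring
            simp_rw [hneg]
            rw [Finset.prod_mul_distrib, Finset.prod_const, Finset.card_univ, Fintype.card_fin]
          rw [this]
          have hC : (-1 : MvPolynomial (Fin u) K)^m = MvPolynomial.C ((-1:K)^m) := by
            rw [map_pow, map_neg, map_one]
          rw [hC, MvPolynomial.coeff_C_mul]
        · rw [if_neg ht]
          refine MvPolynomial.coeff_eq_zero_of_totalDegree_lt ?_
          rw [hμsum]
          have hdeg : (∏ ℓ ∈ Finset.univ \ t, (- Lp ℓ)).totalDegree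
              ≤ (Finset.univ \ t).card := by
            refine le_trans (MvPolynomial.totalDegree_finset_prod _ _) ?_
            calc ∑ ℓ ∈ Finset.univ \ t, (-Lp ℓ).totalDegree
                ≤ ∑ _ℓ ∈ Finset.univ \ t, 1 := Finset.sum_le_sum fun ℓ _ => degnegLp ℓ
              _ = (Finset.univ \ t).card := by simp
          have hcard : (Finset.univ \ t).card < m := by
            obtain ⟨x, hx⟩ := Finset.nonempty_iff_ne_empty.mpr ht
            have h1 : (Finset.univ \ t).card = m - t.card := by
              rw [Finset.card_sdiff_of_subset (Finset.subset_univ t), Finset.card_univ, Fintype.card_fin]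
            have h2 : 1 ≤ t.card := Finset.card_pos.mpr ⟨x, hx⟩
            have h3 : t.card ≤ m := by
              refine le_trans (Finset.card_le_card (Finset.subset_univ t)) ?_
              simp
            omega
          omega
      rw [Finset.sum_congr rfl hterm,
        Finset.sum_ite_eq' _ ∅ (fun _ => (-1:K)^m * MvPolynomial.coeff μ F),
        if_pos (Finset.empty_mem_powerset _)]
    rw [hcoeffG, hcF, mul_zero] at hexp
    exact hne hexp

lemma rainbow' {m : ℕ} (W : Type) [AddCommGroup W] [Module K W] [FiniteDimensional K W]
    (hu : 1 ≤ finrank K W) (ψ : Fin m → (W →ₗ[K] K))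
    (hyp : ∀ w : W, w ≠ 0 → ∀ c : K, ∃ ℓ, ψ ℓ w = c) :
    finrank K W * (Fintype.card K - 1) + 1 ≤ m := by
  classical
  let b : Basis (Fin (finrank K W)) K W := finBasis K W
  refine rainbow hu (fun ℓ i => ψ ℓ (b i)) ?_
  intro g hg c
  have hw : b.equivFun.symm g ≠ 0 := fun h => hg (by
    have h2 := congrArg b.equivFun h
    rwa [LinearEquiv.apply_symm_apply, map_zero] at h2)
  obtain ⟨ℓ, hℓ⟩ := hyp _ hw c
  refine ⟨ℓ, ?_⟩
  rw [← hℓ, Basis.equivFun_symm_apply, map_sum]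
  exact Finset.sum_congr rfl fun i _ => by rw [map_smul, smul_eq_mul, mul_comm]

lemma compl_rainbow {m : ℕ} (W : Type) [AddCommGroup W] [Module K W] [FiniteDimensional K W]
    (φ : W) (hφ : φ ≠ 0) (hrk : 2 ≤ finrank K W)
    (ε : Fin m → (W →ₗ[K] K)) (hε : ∀ j, ε j φ ≠ 0)
    (hcov : ∀ w : W, (∀ c : K, w ≠ c • φ) → ∃ j, ε j w = 0) :
    (finrank K W - 1) * (Fintype.card K - 1) + 1 ≤ m := by
  classical
  obtain ⟨C, hC⟩ := Submodule.exists_isCompl (Submodule.span K {φ})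
  have hCrank : finrank K ↥C + 1 = finrank K W := by
    have hic := Submodule.finrank_add_eq_of_isCompl hC
    rw [finrank_span_singleton hφ] at hic
    omega
  have hCone : 1 ≤ finrank K ↥C := by omega
  let ψ : Fin m → (↥C →ₗ[K] K) := fun j => ((ε j φ)⁻¹ • (ε j)).comp C.subtype
  have hrain : ∀ g : ↥C, g ≠ 0 → ∀ c : K, ∃ j, ψ j g = c := by
    intro g hg c
    have hnc : ∀ c' : K, (g : W) - c • φ ≠ c' • φ := by
      intro c' hc
      have hgmem : (g : W) ∈ Submodule.span K {φ} := by
        rw [Submodule.mem_span_singleton]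
        refine ⟨c' + c, ?_⟩
        rw [add_smul, ← hc]
        abel
      have hz : (g : W) = 0 := Submodule.disjoint_def.mp hC.disjoint _ hgmem g.2
      exact hg (ZeroMemClass.coe_eq_zero.mp hz)
    obtain ⟨j, hj⟩ := hcov _ hnc
    refine ⟨j, ?_⟩
    have hev : ε j (g : W) = c * ε j φ := by
      rw [map_sub, map_smul, smul_eq_mul, sub_eq_zero] at hj
      exact hj
    have hpsi : ψ j g = (ε j φ)⁻¹ * ε j (g : W) := rfl
    rw [hpsi, hev, mul_comm c, ← mul_assoc, inv_mul_cancel₀ (hε j), one_mul]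
  have hrb := rainbow' ↥C hCone ψ hrain
  have hCeq : finrank K ↥C = finrank K W - 1 := by omega
  rwa [hCeq] at hrb

section Geometry

variable {V : Type} [AddCommGroup V] [Module K V] [FiniteDimensional K V]

lemma exists_functional (H : Submodule K V) (hH : finrank K ↥H + 1 = finrank K V) :
    ∃ φ : V →ₗ[K] K, LinearMap.ker φ = H := by
  have hq1 : finrank K (V ⧸ H) = 1 := by
    have h := Submodule.finrank_quotient_add_finrank H
    omega
  let b : Basis (Fin 1) K (V ⧸ H) := Module.finBasisOfFinrankEq K (V ⧸ H) hq1
  refine ⟨(b.coord 0).comp H.mkQ, ?_⟩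
  ext x
  simp only [LinearMap.mem_ker, LinearMap.comp_apply]
  constructor
  · intro hx
    have hz : b.repr (H.mkQ x) = 0 := by
      apply Finsupp.ext
      intro i
      have hi : i = 0 := Subsingleton.elim i 0
      subst hi
      simpa [Basis.coord_apply] using hx
    have : H.mkQ x = 0 := by
      have := congrArg b.repr.symm hz
      simpa using this
    rwa [Submodule.mkQ_apply, Submodule.Quotient.mk_eq_zero] at this
  · intro hx
    have : H.mkQ x = 0 := by rwa [Submodule.mkQ_apply, Submodule.Quotient.mk_eq_zero]
    rw [this, Basis.coord_apply]
    simp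

lemma eq_smul_of_ker_le (f g : V →ₗ[K] K) (x : V) (hx : g x ≠ 0)
    (h : LinearMap.ker g ≤ LinearMap.ker f) : f = (f x / g x) • g := by
  ext v
  have hv : v - (g v / g x) • x ∈ LinearMap.ker g := by
    rw [LinearMap.mem_ker, map_sub, map_smul, smul_eq_mul, div_mul_cancel₀ _ hx, sub_self]
  have hfv := h hv
  rw [LinearMap.mem_ker, map_sub, map_smul, smul_eq_mul, sub_eq_zero] at hfv
  rw [LinearMap.smul_apply, smul_eq_mul, hfv]
  field_simp

lemma span_pair_of_line {ℓ : Submodule K V} (h2 : finrank K ↥ℓ = 2) {H : Submodule K V}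
    {h e : V} (hhl : h ∈ ℓ) (hhH : h ∈ H) (hh0 : h ≠ 0) (hel : e ∈ ℓ) (heH : e ∉ H) :
    ∀ v ∈ ℓ, ∃ a b : K, v = a • h + b • e := by
  have hle : Submodule.span K {h, e} ≤ ℓ := by
    rw [Submodule.span_le]
    rintro x hx
    rcases hx with rfl | hx
    · exact hhl
    · rw [Set.mem_singleton_iff] at hx; subst hx; exact hel
  have hP : Submodule.span K {h, e} = ℓ := by
    refine Submodule.eq_of_le_of_finrank_eq hle ?_
    have h1 : finrank K ↥(Submodule.span K ({h, e} : Set V)) ≤ 2 := by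
      have := Submodule.finrank_mono hle
      omega
    have hlt : Submodule.span K ({h} : Set V) < Submodule.span K ({h, e} : Set V) := by
      refine lt_of_le_of_ne (Submodule.span_mono (by simp)) ?_
      intro hc
      have he' : e ∈ Submodule.span K ({h} : Set V) := by
        rw [hc]; exact Submodule.subset_span (by simp)
      obtain ⟨c, hc'⟩ := Submodule.mem_span_singleton.mp he'
      exact heH (hc' ▸ Submodule.smul_mem H c hhH)
    have hlt2 := Submodule.finrank_lt_finrank_of_lt hlt
    have hone : finrank K ↥(Submodule.span K ({h} : Set V)) = 1 := finrank_span_singleton hh0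
    omega
  intro v hv
  rw [← hP] at hv
  obtain ⟨a, b, hab⟩ := Submodule.mem_span_pair.mp hv
  exact ⟨a, b, hab.symm⟩

end Geometry

lemma key {N : ℕ} (L : Set (Submodule K (Fin (N+1) → K)))
    (hL2 : ∀ ℓ ∈ L, finrank K ↥ℓ = 2)
    (hHP : ∀ H' : Submodule K (Fin (N + 1) → K), finrank K ↥H' = N →
        Submodule.span K
            (((⋃ ℓ ∈ L, (ℓ : Set (Fin (N + 1) → K))) \ {0}) ∩
              (H' : Set (Fin (N + 1) → K))) = H')
    (H : Submodule K (Fin (N+1) → K)) (hH : finrank K ↥H = N) :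
    N - (N - 1) / Fintype.card K ≤ {ℓ ∈ L | ¬ ℓ ≤ H}.ncard := by
  classical
  set q := Fintype.card K with hqdef
  have hq : 2 ≤ q := Fintype.one_lt_card
  set M : Set (Submodule K (Fin (N+1) → K)) := {ℓ ∈ L | ¬ ℓ ≤ H} with hM
  have hMfin : M.Finite := Set.toFinite _
  set m := M.ncard with hm
  by_cases hNm : N ≤ m
  · exact le_trans (Nat.sub_le N _) hNm
  push_neg at hNm
  have hVrank : finrank K (Fin (N+1) → K) = N + 1 := Module.finrank_fin_fun K
  have hMtf : hMfin.toFinset.card = m := (Set.ncard_eq_toFinset_card M hMfin).symm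
  let en : Fin m ≃ {x // x ∈ hMfin.toFinset} := (Finset.equivFinOfCardEq hMtf).symm
  let linf : Fin m → Submodule K (Fin (N+1) → K) := fun j => (en j : Submodule K (Fin (N+1) → K))
  have hlinf : ∀ j, linf j ∈ M := fun j => (hMfin.mem_toFinset).mp (en j).2
  obtain ⟨φ0, hφ0⟩ := exists_functional H (by rw [hH, hVrank])
  have hker : ∀ x, x ∈ H ↔ φ0 x = 0 := fun x => by rw [← hφ0]; exact LinearMap.mem_ker
  have hφ0ne : φ0 ≠ 0 := by
    intro hc
    have hc2 : H = ⊤ := by rw [← hφ0, hc]; exact LinearMap.ker_zero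
    rw [hc2, finrank_top, hVrank] at hH
    omega
  have hchoose : ∀ j : Fin m, ∃ a b : Fin (N+1) → K,
      a ∈ linf j ∧ a ∈ H ∧ a ≠ 0 ∧ b ∈ linf j ∧ b ∉ H ∧
        ∀ v ∈ linf j, ∃ s t : K, v = s • a + t • b := by
    intro j
    obtain ⟨hjL, hjH⟩ := hlinf j
    have h2' : finrank K ↥(linf j) = 2 := hL2 _ hjL
    have hne : linf j ⊓ H ≠ ⊥ := by
      intro hc
      have hsum := Submodule.finrank_sup_add_finrank_inf_eq (linf j) H
      rw [hc] at hsum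
      have h0 : finrank K (↥(⊥ : Submodule K (Fin (N+1) → K))) = 0 := finrank_bot K _
      have hle := Submodule.finrank_le (linf j ⊔ H)
      rw [hVrank] at hle
      omega
    obtain ⟨a, hamem, ha0⟩ := Submodule.exists_mem_ne_zero_of_ne_bot hne
    have hal : a ∈ linf j := (Submodule.mem_inf.mp hamem).1
    have haH : a ∈ H := (Submodule.mem_inf.mp hamem).2
    obtain ⟨b, hbl, hbH⟩ := SetLike.not_le_iff_exists.mp hjH
    exact ⟨a, b, hal, haH, ha0, hbl, hbH,
      span_pair_of_line h2' hal haH ha0 hbl hbH⟩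
  choose hv ev h1 h2 h3 h4 h5 h6 using hchoose
  have hφev : ∀ j, φ0 (ev j) ≠ 0 := fun j hc => h5 j ((hker _).mpr hc)
  set S := Submodule.span K (Set.range hv) with hS
  have hSH : S ≤ H := Submodule.span_le.mpr (by rintro x ⟨j, rfl⟩; exact h2 j)
  have hSle : finrank K ↥S ≤ m := by
    have hsp := finrank_range_le_card (R := K) hv
    simpa [Set.finrank, Fintype.card_fin] using hsp
  set U := S.dualAnnihilator with hU
  have hUrank : finrank K ↥U = (N+1) - finrank K ↥S := by
    have e : finrank K ((Fin (N+1) → K) ⧸ S) = finrank K ↥U :=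
      LinearEquiv.finrank_eq (Subspace.quotEquivAnnihilator S)
    have h := Submodule.finrank_quotient_add_finrank S
    rw [hVrank] at h
    omega
  have hφ0U : φ0 ∈ U := by
    rw [hU, Submodule.mem_dualAnnihilator]
    intro w hw
    exact (hker w).mp (hSH hw)
  set φ0' : ↥U := ⟨φ0, hφ0U⟩ with hφ0'
  have hφ0'ne : φ0' ≠ 0 := fun hc => hφ0ne (congrArg Subtype.val hc)
  let ε : Fin m → (↥U →ₗ[K] K) := fun j => (LinearMap.applyₗ (ev j)).comp U.subtype
  have hεapp : ∀ j (w : ↥U), ε j w = (w : Module.Dual K (Fin (N+1) → K)) (ev j) :=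
    fun j w => rfl
  have hε : ∀ j, ε j φ0' ≠ 0 := fun j => hφev j
  have hrk : 2 ≤ finrank K ↥U := by omega
  have hcov : ∀ w : ↥U, (∀ c : K, w ≠ c • φ0') → ∃ j, ε j w = 0 := by
    intro w hw
    set f : Module.Dual K (Fin (N+1) → K) := (w : Module.Dual K (Fin (N+1) → K)) with hf
    have hfS : ∀ x ∈ S, f x = 0 := by
      have hmem : f ∈ S.dualAnnihilator := w.2
      rw [Submodule.mem_dualAnnihilator] at hmem
      exact hmem
    by_contra hexj
    push_neg at hexj
    have hf0 : f ≠ 0 := by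
      intro hc
      refine hw 0 ?_
      apply Subtype.ext
      rw [zero_smul]
      exact hc
    have hx0 : ∃ x, f x ≠ 0 := by
      by_contra hcc
      push_neg at hcc
      exact hf0 (LinearMap.ext fun x => by rw [hcc x]; rfl)
    obtain ⟨x0, hx0⟩ := hx0
    have hsurj : LinearMap.range f = ⊤ := LinearMap.range_eq_top.mpr
      (fun c' => ⟨(c' / f x0) • x0, by rw [map_smul, smul_eq_mul, div_mul_cancel₀ _ hx0]⟩)
    have hkerf : finrank K ↥(LinearMap.ker f) = N := by
      have hrn := LinearMap.finrank_range_add_finrank_ker f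
      rw [hsurj, finrank_top, finrank_self, hVrank] at hrn
      omega
    have hspan := hHP (LinearMap.ker f) hkerf
    have hsub : ((⋃ ℓ ∈ L, (ℓ : Set (Fin (N + 1) → K))) \ {0}) ∩
        ((LinearMap.ker f : Submodule K (Fin (N+1) → K)) : Set (Fin (N+1) → K))
        ⊆ (H : Set (Fin (N+1) → K)) := by
      rintro v ⟨⟨hvU, hv0⟩, hvker⟩
      rw [Set.mem_iUnion₂] at hvU
      obtain ⟨ℓ0, hℓ0L, hvℓ0⟩ := hvU
      by_cases hle : ℓ0 ≤ H
      · exact hle hvℓ0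
      · have hℓ0M : ℓ0 ∈ M := ⟨hℓ0L, hle⟩
        set j := en.symm ⟨ℓ0, hMfin.mem_toFinset.mpr hℓ0M⟩ with hj
        have hlj : linf j = ℓ0 := by
          rw [hj]
          show ((en (en.symm _)) : Submodule K _) = ℓ0
          rw [Equiv.apply_symm_apply]
        obtain ⟨s, t, hst⟩ := h6 j v (by rw [hlj]; exact hvℓ0)
        have hfv : f v = 0 := by
          have hvk : v ∈ LinearMap.ker f := hvker
          rwa [LinearMap.mem_ker] at hvk
        have hfh : f (hv j) = 0 := hfS (hv j) (Submodule.subset_span (Set.mem_range_self j))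
        have hftev : t * f (ev j) = 0 := by
          have hexpand : f v = s * f (hv j) + t * f (ev j) := by
            rw [hst]
            simp [map_add, map_smul]
          rw [hfv, hfh, mul_zero, zero_add] at hexpand
          exact hexpand.symm
        rcases mul_eq_zero.mp hftev with ht0 | hfev
        · have hvH : v ∈ H := by
            rw [hst, ht0]
            simpa using Submodule.smul_mem H s (h2 j)
          exact hvH
        · exact absurd hfev (hexj j)
    have hkerle : LinearMap.ker f ≤ H := by
      rw [← hspan]
      exact Submodule.span_le.mpr hsub
    have hkerH : LinearMap.ker f = H :=
      Submodule.eq_of_le_of_finrank_eq hkerle (by rw [hkerf, hH])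
    have hHtop : H ≠ ⊤ := by
      intro hc
      rw [hc, finrank_top, hVrank] at hH
      omega
    have hlt : H < (⊤ : Submodule K (Fin (N+1) → K)) := Ne.lt_top hHtop
    obtain ⟨x1, -, hx1⟩ := SetLike.exists_of_lt hlt
    have hφx1 : φ0 x1 ≠ 0 := fun hc => hx1 ((hker x1).mpr hc)
    have hfeq : f = (f x1 / φ0 x1) • φ0 :=
      eq_smul_of_ker_le f φ0 x1 hφx1 (by rw [hφ0, ← hkerH])
    refine hw (f x1 / φ0 x1) (Subtype.ext ?_)
    exact hfeq
  have hrb := compl_rainbow (↥U) φ0' hφ0'ne hrk ε hε hcov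
  rw [← hqdef] at hrb
  have hprod : (N - m) * (q - 1) + 1 ≤ m := by
    refine le_trans ?_ hrb
    have hge : N - m ≤ finrank K ↥U - 1 := by omega
    have hmul := Nat.mul_le_mul_right (q - 1) hge
    omega
  have hq1 : q * (N - m) ≤ N - 1 := by
    have hsplit : q * (N - m) = (q-1) * (N - m) + (N - m) := by
      have hq' : (q-1)+1 = q := by omega
      calc q * (N-m) = ((q-1)+1)*(N-m) := by rw [hq']
        _ = (q-1)*(N-m) + (N-m) := by ring
    have h2' : (q - 1) * (N - m) + 1 ≤ m := by rw [mul_comm] at hprod; exact hprod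
    omega
  have hdiv : N - m ≤ (N - 1) / q :=
    (Nat.le_div_iff_mul_le (by omega)).mpr (by rw [mul_comm]; exact hq1)
  calc N - (N-1)/q ≤ N - (N - m) := Nat.sub_le_sub_left hdiv N
    _ = m := by omega

section Assemble

variable {V : Type} [AddCommGroup V] [Module K V] [FiniteDimensional K V]

lemma finrank_finset_sup_le (T : Finset (Submodule K V)) (h : ∀ ℓ ∈ T, finrank K ↥ℓ ≤ 2) :
    finrank K ↥(T.sup id) ≤ 2 * T.card := by
  classical
  induction T using Finset.induction_on with
  | empty => simp [Finset.sup_empty, finrank_bot]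
  | @insert a s ha ih =>
      rw [Finset.sup_insert]
      have hs := Submodule.finrank_sup_add_finrank_inf_eq a (s.sup id)
      have h1 : finrank K ↥a ≤ 2 := h a (Finset.mem_insert_self a s)
      have h2 : finrank K ↥(s.sup id) ≤ 2 * s.card :=
        ih fun ℓ hℓ => h ℓ (Finset.mem_insert_of_mem hℓ)
      rw [Finset.card_insert_of_notMem ha]
      show finrank K ↥(id a ⊔ s.sup id) ≤ 2 * (s.card + 1)
      simp only [id_eq] at hs ⊢
      omega

lemma exists_extension (j : ℕ) : ∀ W : Submodule K V, finrank K ↥W + j ≤ finrank K V →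
    ∃ H : Submodule K V, W ≤ H ∧ finrank K ↥H = finrank K ↥W + j := by
  induction j with
  | zero => exact fun W _ => ⟨W, le_refl _, by simp⟩
  | succ j ih =>
      intro W hW
      have hWT : W ≠ ⊤ := by
        intro hc
        rw [hc, finrank_top] at hW
        omega
      have hlt : W < (⊤ : Submodule K V) := Ne.lt_top hWT
      obtain ⟨x, -, hx⟩ := SetLike.exists_of_lt hlt
      have hx0 : x ≠ 0 := fun hc => hx (hc ▸ W.zero_mem)
      have hinf : W ⊓ Submodule.span K {x} = ⊥ := by
        rw [eq_bot_iff]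
        rintro y hy
        obtain ⟨hyW, hysp⟩ := Submodule.mem_inf.mp hy
        obtain ⟨c, rfl⟩ := Submodule.mem_span_singleton.mp hysp
        rcases eq_or_ne c 0 with rfl | hc
        · simp
        · have hxW : x ∈ W := by
            have hs := W.smul_mem c⁻¹ hyW
            rwa [smul_smul, inv_mul_cancel₀ hc, one_smul] at hs
          exact absurd hxW hx
      have hrank : finrank K ↥(W ⊔ Submodule.span K {x}) = finrank K ↥W + 1 := by
        have hs := Submodule.finrank_sup_add_finrank_inf_eq W (Submodule.span K {x})
        rw [hinf, finrank_span_singleton hx0] at hs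
        have hb : finrank K (↥(⊥ : Submodule K V)) = 0 := finrank_bot K V
        omega
      obtain ⟨H, hle, hr⟩ := ih (W ⊔ Submodule.span K {x}) (by omega)
      exact ⟨H, le_trans le_sup_left hle, by omega⟩

end Assemble

lemma main {N : ℕ} (L : Set (Submodule K (Fin (N+1) → K)))
    (hL2 : ∀ ℓ ∈ L, finrank K ↥ℓ = 2)
    (hHP : ∀ H' : Submodule K (Fin (N + 1) → K), finrank K ↥H' = N →
        Submodule.span K
            (((⋃ ℓ ∈ L, (ℓ : Set (Fin (N + 1) → K))) \ {0}) ∩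
              (H' : Set (Fin (N + 1) → K))) = H') :
    N + N / 2 - (N - 1) / Fintype.card K ≤ L.ncard := by
  classical
  set q := Fintype.card K with hqdef
  set n := L.ncard with hn
  have hVrank : finrank K (Fin (N+1) → K) = N + 1 := Module.finrank_fin_fun K
  have hLfin : L.Finite := Set.toFinite _
  set t0 := min (N / 2) n with ht0
  obtain ⟨T, hTL, hTcard⟩ := Set.exists_subset_card_eq (show t0 ≤ L.ncard from min_le_right _ _)
  have hTfin : T.Finite := hLfin.subset hTL
  have hTfcard : hTfin.toFinset.card = t0 := by
    rw [← Set.ncard_eq_toFinset_card T hTfin, hTcard]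
  set WT := hTfin.toFinset.sup id with hWT
  have hWTrank : finrank K ↥WT ≤ 2 * t0 := by
    rw [← hTfcard]
    refine finrank_finset_sup_le _ fun ℓ hℓ => ?_
    exact le_of_eq (hL2 ℓ (hTL (hTfin.mem_toFinset.mp hℓ)))
  have h2t0 : 2 * t0 ≤ N := by
    have := min_le_left (N / 2) n
    omega
  obtain ⟨H, hWH, hHrank⟩ := exists_extension (N - finrank K ↥WT) WT (by omega)
  have hHN : finrank K ↥H = N := by omega
  have hkey := key L hL2 hHP H hHN
  rw [← hqdef] at hkey
  set M : Set (Submodule K (Fin (N+1) → K)) := {ℓ ∈ L | ¬ ℓ ≤ H} with hMdef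
  have hMfin : M.Finite := Set.toFinite _
  have hdisj : Disjoint T M := by
    rw [Set.disjoint_left]
    intro ℓ hℓT hℓM
    refine hℓM.2 (le_trans ?_ hWH)
    have := Finset.le_sup (f := id) (hTfin.mem_toFinset.mpr hℓT)
    exact this
  have hUnion : T ∪ M ⊆ L := Set.union_subset hTL (fun ℓ hℓ => hℓ.1)
  have hsum : t0 + M.ncard ≤ n := by
    rw [← hTcard, ← Set.ncard_union_eq hdisj hTfin hMfin]
    exact Set.ncard_le_ncard hUnion hLfin
  obtain ⟨k, hkdef⟩ : ∃ k, (N-1)/q = k := ⟨_, rfl⟩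
  have hkle : k ≤ N - 1 := hkdef ▸ Nat.div_le_self (N-1) q
  rw [hkdef] at hkey ⊢
  by_cases hmin : N / 2 ≤ n
  · have ht0eq : t0 = N / 2 := min_eq_left hmin
    omega
  · have ht0eq : t0 = n := min_eq_right (le_of_not_ge hmin)
    omega

end HPAux




open Module

theorem stmt_18 (q N : ℕ) (K : Type) [Field K] [Fintype K] (hK : Fintype.card K = q) :
    -- every higgledy-piggledy line set of PG(N,q) has at least N + ⌊N/2⌋ − ⌊(N−1)/q⌋ lines
    (∀ L : Set (Submodule K (Fin (N + 1) → K)),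
      (∀ ℓ ∈ L, finrank K ℓ = 2) →
      (∀ H : Submodule K (Fin (N + 1) → K), finrank K H = N →
        Submodule.span K
            (((⋃ ℓ ∈ L, (ℓ : Set (Fin (N + 1) → K))) \ {0}) ∩
              (H : Set (Fin (N + 1) → K))) = H) →
      N + N / 2 - (N - 1) / q ≤ L.ncard) ∧
    -- in particular, if q ≥ N then at least N + ⌊N/2⌋ lines
    (N ≤ q →
      ∀ L : Set (Submodule K (Fin (N + 1) → K)),
        (∀ ℓ ∈ L, finrank K ℓ = 2) →
        (∀ H : Submodule K (Fin (N + 1) → K), finrank K H = N →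
          Submodule.span K
              (((⋃ ℓ ∈ L, (ℓ : Set (Fin (N + 1) → K))) \ {0}) ∩
                (H : Set (Fin (N + 1) → K))) = H) →
        N + N / 2 ≤ L.ncard) := by
  subst hK
  constructor
  · intro L hL2 hHP
    exact HPAux.main L hL2 hHP
  · intro hNq L hL2 hHP
    have h := HPAux.main L hL2 hHP
    have hq0 : 0 < Fintype.card K := Fintype.card_pos
    have hdiv : (N - 1) / Fintype.card K = 0 := Nat.div_eq_of_lt (by omega)
    rw [hdiv] at h
    omega
end
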